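/- arXiv:1110.3967 — 9 statements merged into one kernel-verified Lean document; each statement's English description precedes it below -/
import Mathlib

section
/- Let P be a line-free polyhedron in R^d and let L be a d-dimensional polyhedron whose recession cone is a linear subspace. Then R_L(P) = conv(P \ int(L)) is a polyhedron. -/
open Pointwise

noncomputable section

/-- Standard inner product on `Fin d → ℝ`. -/
def dot {d : ℕ} (a x : Fin d → ℝ) : ℝ := ∑ i, a i * x i

/-- A polyhedron: intersection of finitely many closed halfspaces. -/
def IsPolyhedron {d : ℕ} (P : Set (Fin d → ℝ)) : Prop :=
  ∃ (n : ℕ) (a : Fin n → Fin d → ℝ) (b : Fin n → ℝ),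
    P = {x | ∀ i, dot (a i) x ≤ b i}

/-- A rational polyhedron: intersection of finitely many rational closed halfspaces. -/
def IsRationalPolyhedron {d : ℕ} (P : Set (Fin d → ℝ)) : Prop :=
  ∃ (n : ℕ) (a : Fin n → Fin d → ℚ) (b : Fin n → ℚ),
    P = {x | ∀ i, dot (fun j => ((a i j : ℝ))) x ≤ (b i : ℝ)}

/-- Recession cone of a set: `{u : P + u ⊆ P}`. -/
def recCone {d : ℕ} (P : Set (Fin d → ℝ)) : Set (Fin d → ℝ) :=
  {u | ∀ x ∈ P, x + u ∈ P}

/-- A set of vectors is a linear subspace. -/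
def IsLinearSubspaceSet {d : ℕ} (S : Set (Fin d → ℝ)) : Prop :=
  ∃ W : Submodule ℝ (Fin d → ℝ), S = (W : Set (Fin d → ℝ))

/-- A set is line-free if it contains no affine line. -/
def LineFree {d : ℕ} (P : Set (Fin d → ℝ)) : Prop :=
  ¬ ∃ (x v : Fin d → ℝ), v ≠ 0 ∧ ∀ t : ℝ, x + t • v ∈ P

/-- `F` is a face of the convex set `P`. -/
def IsFaceOf {d : ℕ} (P F : Set (Fin d → ℝ)) : Prop :=
  F ⊆ P ∧ Convex ℝ F ∧ ∀ x ∈ P, ∀ y ∈ P, ∀ t : ℝ, 0 < t → t < 1 →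
    t • x + (1 - t) • y ∈ F → x ∈ F ∧ y ∈ F

/-- Affine dimension of a set. -/
def adim {d : ℕ} (S : Set (Fin d → ℝ)) : ℕ :=
  Module.finrank ℝ (affineSpan ℝ S).direction

/-- Vertices: 0-dimensional faces, i.e. singleton faces. -/
def IsVertex {d : ℕ} (P : Set (Fin d → ℝ)) (x : Fin d → ℝ) : Prop :=
  IsFaceOf P {x}

/-- Union of all edges (1-dimensional faces) of `P`. -/
def edgeUnion {d : ℕ} (P : Set (Fin d → ℝ)) : Set (Fin d → ℝ) :=
  ⋃₀ {e | IsFaceOf P e ∧ adim e = 1}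

/-- A representation of `L` with width `m`:
`L = {x : bᵢ - m ≤ ⟨aᵢ, x⟩ ≤ bᵢ, i ∈ [n]}` with `aᵢ ∈ ℤ^d \ {0}`, `bᵢ ∈ ℤ`. -/
def HasWidthRep {d : ℕ} (L : Set (Fin d → ℝ)) (m : ℕ) : Prop :=
  ∃ (n : ℕ) (a : Fin n → Fin d → ℤ) (b : Fin n → ℤ),
    (∀ i, a i ≠ 0) ∧
    L = {x | ∀ i, (b i : ℝ) - (m : ℝ) ≤ dot (fun j => ((a i j : ℝ))) x ∧
        dot (fun j => ((a i j : ℝ))) x ≤ (b i : ℝ)}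

/-- Max-facet-width, `+∞` if no representation exists. -/
def mfw {d : ℕ} (L : Set (Fin d → ℝ)) : ℕ∞ :=
  sInf {m : ℕ∞ | ∃ k : ℕ, m = (k : ℕ∞) ∧ HasWidthRep L k}

/-- The set of integral points of `ℝ^d`. -/
def intPoints (d : ℕ) : Set (Fin d → ℝ) :=
  {x | ∃ z : Fin d → ℤ, x = fun i => (z i : ℝ)}

/-- A lattice-free set: `d`-dimensional closed convex set whose interior
contains no integral point. -/
def LatticeFree {d : ℕ} (L : Set (Fin d → ℝ)) : Prop :=
  IsClosed L ∧ Convex ℝ L ∧ adim L = d ∧ interior L ∩ intPoints d = ∅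

/-- A maximal lattice-free set. -/
def MaxLatticeFree {d : ℕ} (L : Set (Fin d → ℝ)) : Prop :=
  LatticeFree L ∧ ∀ L' : Set (Fin d → ℝ), LatticeFree L' → L ⊆ L' → L = L'

/-- `ℤ^d`-equivalence: `Y = U(X) + b` for a unimodular `U` and integral `b`. -/
def ZdEquiv {d : ℕ} (X Y : Set (Fin d → ℝ)) : Prop :=
  ∃ (U : Matrix (Fin d) (Fin d) ℤ) (b : Fin d → ℤ),
    (U.det = 1 ∨ U.det = -1) ∧
    Y = (fun x => (U.map (Int.cast : ℤ → ℝ)).mulVec x + fun i => (b i : ℝ)) '' X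

/-- Sign vectors with an even number of `-1` entries. -/
def Aplus (d : ℕ) : Set (Fin d → ℝ) :=
  {a | (∀ i, a i = 1 ∨ a i = -1) ∧ Even {i | a i = -1}.ncard}

/-- Sign vectors with an odd number of `-1` entries. -/
def Aminus (d : ℕ) : Set (Fin d → ℝ) :=
  {a | (∀ i, a i = 1 ∨ a i = -1) ∧ Odd {i | a i = -1}.ncard}

/-!
Write `L = {x | fₖ x ≤ bₖ}` with nonzero functionals `fₖ`; then `P \ int L` is the finite union
of the polyhedra `Qₖ = P ∩ {fₖ ≥ bₖ}`. Following Balas, `conv (⋃ Qₖ)` is the image under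
`(y, λ) ↦ ∑ₖ yₖ` of the polyhedron of tuples `(yₖ, λₖ)` with `λ` in the standard simplex and
`(yₖ, λₖ)` in the homogenization of `Qₖ`, as soon as the components with `λₖ = 0`, which are
recession directions of `P`, can be added to the hull. This is where the hypothesis on `L`
enters: its recession cone `{f ≤ 0}` is a subspace, so a recession direction `u` of `P` either
has `fₖ u > 0` for some `k`, and then every point of the hull reaches `Qₖ` along `u`, or is
parallel to every piece. Projections of polyhedra are polyhedra by Fourier–Motzkin elimination.
-/

theorem exists_forall_mul_le_iff {ι : Type*} [Finite ι] (g u : ι → ℝ) :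
    (∃ t, ∀ i, g i * t ≤ u i) ↔
      (∀ i, g i = 0 → 0 ≤ u i) ∧ ∀ i j, 0 < g i → g j < 0 → 0 ≤ g i * u j - g j * u i := by
  constructor
  · rintro ⟨t, ht⟩
    refine ⟨fun i hi => by simpa [hi] using ht i, fun i j hi hj => ?_⟩
    nlinarith [mul_le_mul_of_nonneg_left (ht j) hi.le,
      mul_le_mul_of_nonneg_left (ht i) (neg_nonneg.2 hj.le)]
  · rintro ⟨hzero, hpair⟩
    cases isEmpty_or_nonempty ι
    · exact ⟨0, isEmptyElim⟩
    obtain ⟨m, hm⟩ := Finite.exists_ge fun i => u i / g i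
    -- `t` is the largest lower bound `u j / g j` (`g j < 0`), padded with `m` in case there is none
    let lo : ι → ℝ := fun j => if g j < 0 then u j / g j else m
    have hlo : ∀ i, 0 < g i → ∀ j, lo j ≤ u i / g i := by
      intro i hi j
      by_cases hj : g j < 0
      · simp only [lo, if_pos hj, div_le_iff_of_neg hj, div_mul_eq_mul_div, div_le_iff₀ hi]
        linarith [hpair i j hi hj]
      · simp only [lo, if_neg hj, hm i]
    refine ⟨⨆ j, lo j, fun i => ?_⟩
    rcases lt_trichotomy (g i) 0 with hi | hi | hi
    · have : lo i ≤ ⨆ j, lo j := le_ciSup (Set.finite_range lo).bddAbove i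
      simp only [lo, if_pos hi, div_le_iff_of_neg hi] at this
      linarith
    · simpa [hi] using hzero i hi
    · have := ciSup_le (hlo i hi)
      rwa [le_div_iff₀ hi, mul_comm] at this

section IsPolyhedral

variable {V W : Type*} [AddCommGroup V] [Module ℝ V] [AddCommGroup W] [Module ℝ W]

def IsPolyhedral (S : Set V) : Prop :=
  ∃ (ι : Type) (_ : Finite ι) (f : ι → V →ₗ[ℝ] ℝ) (b : ι → ℝ), S = {x | ∀ i, f i x ≤ b i}

theorem isPolyhedral_setOf_forall_le {ι : Type} [Finite ι] (f : ι → V →ₗ[ℝ] ℝ) (b : ι → ℝ) :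
    IsPolyhedral {x | ∀ i, f i x ≤ b i} :=
  ⟨ι, inferInstance, f, b, rfl⟩

theorem isPolyhedral_setOf_forall_imp_le {ι : Type} [Finite ι] (p : ι → Prop)
    (f : ι → V →ₗ[ℝ] ℝ) (b : ι → ℝ) : IsPolyhedral {x | ∀ i, p i → f i x ≤ b i} := by
  convert isPolyhedral_setOf_forall_le (fun i : Subtype p => f i) (fun i => b i) using 1
  simp

theorem isPolyhedral_setOf_le (f : V →ₗ[ℝ] ℝ) (b : ℝ) : IsPolyhedral {x | f x ≤ b} := by
  convert isPolyhedral_setOf_forall_le (fun _ : Unit => f) (fun _ => b) using 1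
  simp

theorem IsPolyhedral.iInter {ι : Type} [Finite ι] {S : ι → Set V}
    (hS : ∀ i, IsPolyhedral (S i)) : IsPolyhedral (⋂ i, S i) := by
  choose κ _ f b hS using hS
  convert isPolyhedral_setOf_forall_le (fun p : Σ i, κ i => f p.1 p.2) (fun p => b p.1 p.2) using 1
  ext x
  simp [hS, Sigma.forall]

theorem IsPolyhedral.inter {S T : Set V} (hS : IsPolyhedral S) (hT : IsPolyhedral T) :
    IsPolyhedral (S ∩ T) := by
  rw [Set.inter_eq_iInter]
  exact .iInter fun b => by cases b <;> assumption

theorem isPolyhedral_setOf_eq (f : V →ₗ[ℝ] ℝ) (b : ℝ) : IsPolyhedral {x | f x = b} := by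
  convert (isPolyhedral_setOf_le f b).inter (isPolyhedral_setOf_le (-f) (-b)) using 1
  ext x
  simp [le_antisymm_iff]

theorem isPolyhedral_zero [FiniteDimensional ℝ V] : IsPolyhedral ({0} : Set V) := by
  let b := Module.finBasis ℝ V
  convert IsPolyhedral.iInter fun i => isPolyhedral_setOf_eq (b.coord i) 0 using 1
  ext x
  simp [← b.forall_coord_eq_zero_iff]

theorem IsPolyhedral.preimage {S : Set V} (hS : IsPolyhedral S) (g : W →ₗ[ℝ] V) :
    IsPolyhedral (g ⁻¹' S) := by
  obtain ⟨ι, _, f, b, rfl⟩ := hS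
  exact isPolyhedral_setOf_forall_le (fun i => f i ∘ₗ g) b

theorem IsPolyhedral.convex {S : Set V} (hS : IsPolyhedral S) : Convex ℝ S := by
  obtain ⟨ι, _, f, b, rfl⟩ := hS
  simpa only [Set.ofPred_forall] using
    convex_iInter fun i => convex_halfSpace_le (f i).isLinear (b i)

-- Fourier–Motzkin elimination
theorem IsPolyhedral.image_fst_real {S : Set (V × ℝ)} (hS : IsPolyhedral S) :
    IsPolyhedral (Prod.fst '' S) := by
  obtain ⟨ι, _, f, b, rfl⟩ := hS
  let φ : ι → V →ₗ[ℝ] ℝ := fun i => f i ∘ₗ LinearMap.inl ℝ V ℝ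
  let g : ι → ℝ := fun i => f i (0, 1)
  have hf : ∀ i x t, f i (x, t) = φ i x + g i * t := fun i x t => by
    rw [show (x, t) = LinearMap.inl ℝ V ℝ x + t • ((0 : V), (1 : ℝ)) by simp, map_add, map_smul,
      smul_eq_mul, mul_comm]
    rfl
  have key : Prod.fst '' {p : V × ℝ | ∀ i, f i p ≤ b i} =
      {x | ∀ i, g i = 0 → φ i x ≤ b i} ∩
      {x | ∀ p : ι × ι, 0 < g p.1 ∧ g p.2 < 0 →
        (g p.1 • φ p.2 - g p.2 • φ p.1) x ≤ g p.1 * b p.2 - g p.2 * b p.1} := by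
    ext x
    have := exists_forall_mul_le_iff g fun i => b i - φ i x
    simp only [Set.mem_image, Prod.exists, exists_and_right, exists_eq_right, Set.mem_ofPred_eq,
      Set.mem_inter_iff, hf, Prod.forall, and_imp, LinearMap.sub_apply, LinearMap.smul_apply,
      smul_eq_mul] at this ⊢
    simp only [← le_sub_iff_add_le', this]
    constructor <;> rintro ⟨h₀, h₁⟩ <;>
      exact ⟨fun i hi => by linarith [h₀ i hi], fun i j hi hj => by linarith [h₁ i j hi hj]⟩
  rw [key]
  exact (isPolyhedral_setOf_forall_imp_le _ _ _).inter (isPolyhedral_setOf_forall_imp_le _ _ _)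

theorem IsPolyhedral.image_fst_pi {n : ℕ} {S : Set (V × (Fin n → ℝ))} (hS : IsPolyhedral S) :
    IsPolyhedral (Prod.fst '' S) := by
  induction n generalizing V with
  | zero =>
    convert hS.preimage (LinearMap.inl ℝ V (Fin 0 → ℝ)) using 1
    ext x
    simp only [Set.mem_image, Prod.exists, exists_and_right, exists_eq_right, Set.mem_preimage,
      LinearMap.inl_apply]
    exact ⟨fun ⟨w, hw⟩ => Subsingleton.elim w 0 ▸ hw, fun h => ⟨0, h⟩⟩
  | succ n ih =>
    let e : ((V × ℝ) × (Fin n → ℝ)) ≃ₗ[ℝ] V × (Fin (n + 1) → ℝ) :=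
      LinearEquiv.prodAssoc ℝ V ℝ (Fin n → ℝ) ≪≫ₗ
        (LinearEquiv.refl ℝ V).prodCongr (Fin.consLinearEquiv ℝ fun _ => ℝ)
    convert (ih (hS.preimage e.toLinearMap)).image_fst_real using 1
    ext x
    simpa [e] using (Fin.consLinearEquiv ℝ fun _ => ℝ).surjective.exists

theorem IsPolyhedral.image_fst [FiniteDimensional ℝ W] {S : Set (V × W)} (hS : IsPolyhedral S) :
    IsPolyhedral (Prod.fst '' S) := by
  let e := (LinearEquiv.refl ℝ V).prodCongr (Module.finBasis ℝ W).equivFun.symm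
  convert (hS.preimage e.toLinearMap).image_fst_pi using 1
  ext x
  simpa [e] using (Module.finBasis ℝ W).equivFun.symm.surjective.exists

theorem IsPolyhedral.image [FiniteDimensional ℝ V] [FiniteDimensional ℝ W] {S : Set V}
    (hS : IsPolyhedral S) (g : V →ₗ[ℝ] W) : IsPolyhedral (g '' S) := by
  have hgraph : IsPolyhedral {p : W × V | p.2 ∈ S ∧ g p.2 = p.1} := by
    convert (hS.preimage (LinearMap.snd ℝ W V)).inter
      (isPolyhedral_zero.preimage (g ∘ₗ LinearMap.snd ℝ W V - LinearMap.fst ℝ W V)) using 1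
    ext
    simp [sub_eq_zero]
  convert hgraph.image_fst using 1
  ext
  simp

theorem IsPolyhedral.exists_rep_ne_zero {L : Set V} (hL : IsPolyhedral L) (hne : L.Nonempty) :
    ∃ (K : Type) (_ : Finite K) (f : K → V →ₗ[ℝ] ℝ) (b : K → ℝ),
      (∀ k, f k ≠ 0) ∧ L = {x | ∀ k, f k x ≤ b k} := by
  obtain ⟨ι, _, f, b, rfl⟩ := hL
  obtain ⟨x₀, hx₀⟩ := hne
  refine ⟨{i // f i ≠ 0}, inferInstance, fun i => f i, fun i => b i, fun i => i.2, ?_⟩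
  ext x
  refine ⟨fun hx i => hx i, fun hx i => ?_⟩
  by_cases hi : f i = 0
  · simpa [hi] using hx₀ i
  · exact hx ⟨i, hi⟩

end IsPolyhedral

section ConvexHull

variable {V : Type*} [AddCommGroup V] [Module ℝ V]

def homogenization {ι : Type*} (F : ι → V →ₗ[ℝ] ℝ) (c : ι → ℝ) : Set (V × ℝ) :=
  {p | 0 ≤ p.2 ∧ ∀ i, F i p.1 ≤ p.2 * c i}

theorem isPolyhedral_homogenization {ι : Type} [Finite ι] (F : ι → V →ₗ[ℝ] ℝ) (c : ι → ℝ) :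
    IsPolyhedral (homogenization F c) := by
  convert isPolyhedral_setOf_forall_le (fun o : Option ι => o.elim (-LinearMap.snd ℝ V ℝ)
    fun i => F i ∘ₗ LinearMap.fst ℝ V ℝ - c i • LinearMap.snd ℝ V ℝ) 0 using 1
  ext p
  simp [homogenization, Option.forall, mul_comm]

theorem add_mem_convexHull_iUnion_inter {K : Type*} {P : Set V} {f : K → V →ₗ[ℝ] ℝ} {b : K → ℝ}
    {u : V} (hu : ∀ x ∈ P, ∀ t : ℝ, 0 ≤ t → x + t • u ∈ P)
    (hf : (∀ k, f k u ≤ 0) → ∀ k, f k u = 0) {x : V}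
    (hx : x ∈ convexHull ℝ (⋃ k, P ∩ {x | b k ≤ f k x})) :
    x + u ∈ convexHull ℝ (⋃ k, P ∩ {x | b k ≤ f k x}) := by
  set X := convexHull ℝ (⋃ k, P ∩ {x | b k ≤ f k x})
  suffices h : (⋃ k, P ∩ {x | b k ≤ f k x}) ⊆ (· + u) ⁻¹' X from
    convexHull_min h ((convex_convexHull ℝ _).translate_preimage_left u) hx
  simp only [Set.iUnion_subset_iff]
  rintro m z ⟨hzP, hzm⟩
  have hz : z ∈ X := subset_convexHull ℝ _ (Set.mem_iUnion_of_mem m ⟨hzP, hzm⟩)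
  by_cases h : ∃ k, 0 < f k u
  · obtain ⟨k, hk⟩ := h
    -- far enough along the ray, `z` enters the piece `k`, and `z + u` lies in between
    set T := max 1 ((b k - f k z) / f k u)
    have hT : 1 ≤ T := le_max_left _ _
    have hzT : z + T • u ∈ X := by
      refine subset_convexHull ℝ _ (Set.mem_iUnion_of_mem k ⟨hu z hzP T (by linarith), ?_⟩)
      have := le_max_right 1 ((b k - f k z) / f k u)
      rw [div_le_iff₀ hk] at this
      simp only [Set.mem_ofPred_eq, map_add, map_smul, smul_eq_mul]
      linarith
    have := (convex_convexHull ℝ _).add_smul_mem hz hzT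
      ⟨inv_nonneg.2 (by linarith), inv_le_one_of_one_le₀ hT⟩
    rwa [smul_smul, inv_mul_cancel₀ (by linarith), one_smul] at this
  · simp only [not_exists, not_lt] at h
    refine subset_convexHull ℝ _ (Set.mem_iUnion_of_mem m ⟨?_, ?_⟩)
    · simpa using hu z hzP 1 zero_le_one
    · simpa [hf h m] using hzm

section

variable {K ι : Type} [Fintype K] {Q : K → Set V} {F : K → ι → V →ₗ[ℝ] ℝ} {c : K → ι → ℝ}

open Finset in
theorem sum_fst_mem_convexHull_iUnion (hQ : ∀ k, Q k = {x | ∀ i, F k i x ≤ c k i})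
    (hrec : ∀ k y, (∀ i, F k i y ≤ 0) →
      ∀ x ∈ convexHull ℝ (⋃ k, Q k), x + y ∈ convexHull ℝ (⋃ k, Q k))
    {z : K → V × ℝ} (hz : ∀ k, z k ∈ homogenization (F k) (c k)) (hsum : ∑ k, (z k).2 = 1) :
    ∑ k, (z k).1 ∈ convexHull ℝ (⋃ k, Q k) := by
  set X := convexHull ℝ (⋃ k, Q k)
  -- the terms of positive weight rescale into the pieces, those of zero weight are recession
  -- directions
  set s := univ.filter fun k => 0 < (z k).2
  have hpos : ∑ k ∈ s, (z k).2 • ((z k).2⁻¹ • (z k).1) ∈ X := by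
    refine (convex_convexHull ℝ _).sum_mem (fun k _ => (hz k).1) ?_
      fun k hk => subset_convexHull ℝ _ (Set.mem_iUnion_of_mem k ?_)
    · rw [sum_filter_of_ne fun k _ h => (hz k).1.lt_of_ne' h, hsum]
    · rw [hQ]
      intro i
      rw [map_smul, smul_eq_mul, inv_mul_le_iff₀ (mem_filter.1 hk).2]
      exact (hz k).2 i
  have hzero : ∀ x ∈ X, x + ∑ k ∈ univ.filter (fun k => ¬ 0 < (z k).2), (z k).1 ∈ X := by
    refine sum_induction _ (fun v => ∀ x ∈ X, x + v ∈ X)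
      (fun v w hv hw x hx => add_assoc x v w ▸ hw _ (hv x hx)) (fun x hx => by rwa [add_zero])
      fun k hk => hrec k _ fun i => ?_
    have : (z k).2 = 0 := le_antisymm (not_lt.1 (mem_filter.1 hk).2) (hz k).1
    simpa [this] using (hz k).2 i
  rw [← sum_filter_add_sum_filter_not univ fun k => 0 < (z k).2]
  convert hzero _ hpos using 2
  exact sum_congr rfl fun k hk => (smul_inv_smul₀ (mem_filter.1 hk).2.ne' _).symm

theorem isPolyhedral_convexHull_iUnion [FiniteDimensional ℝ V] [Finite ι]
    (hQ : ∀ k, Q k = {x | ∀ i, F k i x ≤ c k i})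
    (hrec : ∀ k y, (∀ i, F k i y ≤ 0) →
      ∀ x ∈ convexHull ℝ (⋃ k, Q k), x + y ∈ convexHull ℝ (⋃ k, Q k)) :
    IsPolyhedral (convexHull ℝ (⋃ k, Q k)) := by
  classical
  let T : Set (K → V × ℝ) :=
    (⋂ k, LinearMap.proj (R := ℝ) (φ := fun _ : K => V × ℝ) k ⁻¹' homogenization (F k) (c k)) ∩
      {z | (∑ k, LinearMap.snd ℝ V ℝ ∘ₗ LinearMap.proj k) z = 1}
  have hT : IsPolyhedral T := by
    refine IsPolyhedral.inter (IsPolyhedral.iInter fun k => ?_) (isPolyhedral_setOf_eq _ 1)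
    exact (isPolyhedral_homogenization (F k) (c k)).preimage _
  have hmemT : ∀ z, z ∈ T ↔ (∀ k, z k ∈ homogenization (F k) (c k)) ∧ ∑ k, (z k).2 = 1 := by
    simp [T]
  let σ : (K → V × ℝ) →ₗ[ℝ] V := ∑ k, LinearMap.fst ℝ V ℝ ∘ₗ LinearMap.proj k
  have hσ : ∀ z, σ z = ∑ k, (z k).1 := by simp [σ]
  suffices convexHull ℝ (⋃ k, Q k) = σ '' T from this ▸ hT.image σ
  apply subset_antisymm
  · refine convexHull_min (Set.iUnion_subset fun k x hx => ⟨Pi.single k (x, 1), ?_, ?_⟩)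
      (hT.image σ).convex
    · rw [hQ] at hx
      refine (hmemT _).2 ⟨fun k' => ?_, by rw [← Prod.snd_sum, Fintype.sum_pi_single']⟩
      rcases eq_or_ne k' k with rfl | hk
      · simpa [homogenization] using hx
      · simp [homogenization, hk]
    · rw [hσ, ← Prod.fst_sum, Fintype.sum_pi_single']
  · rintro _ ⟨z, hz, rfl⟩
    obtain ⟨hz, hsum⟩ := (hmemT z).1 hz
    exact hσ z ▸ sum_fst_mem_convexHull_iUnion hQ hrec hz hsum

end

theorem IsPolyhedral.convexHull_iUnion_inter_setOf_le [FiniteDimensional ℝ V] {K : Type}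
    [Fintype K] {P : Set V} (hP : IsPolyhedral P) (f : K → V →ₗ[ℝ] ℝ) (b : K → ℝ)
    (hf : ∀ u, (∀ k, f k u ≤ 0) → ∀ k, f k u = 0) :
    IsPolyhedral (convexHull ℝ (⋃ k, P ∩ {x | b k ≤ f k x})) := by
  obtain ⟨ι, _, g, e, rfl⟩ := hP
  refine isPolyhedral_convexHull_iUnion (F := fun k (o : Option ι) => o.elim (-f k) g)
    (c := fun k (o : Option ι) => o.elim (-b k) e) (fun k => ?_)
    fun k u hu x hx => add_mem_convexHull_iUnion_inter (fun z hz t ht i => ?_) (hf u) hx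
  · ext x
    simp [Option.forall, and_comm]
  · have := hu (some i)
    simp only [Option.elim_some] at this
    simp only [Set.mem_ofPred_eq, map_add, map_smul, smul_eq_mul] at hz ⊢
    nlinarith [hz i]

end ConvexHull

theorem isPolyhedron_iff_isPolyhedral {d : ℕ} {P : Set (Fin d → ℝ)} :
    IsPolyhedron P ↔ IsPolyhedral P := by
  let D := dotProductEquiv ℝ (Fin d)
  have hdot : ∀ g x, dot (D.symm g) x = g x := fun g x => congrArg (· x) (D.apply_symm_apply g)
  constructor
  · rintro ⟨n, a, b, rfl⟩
    exact isPolyhedral_setOf_forall_le (fun i => D (a i)) b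
  · rintro ⟨ι, _, f, b, rfl⟩
    let e := Finite.equivFin ι
    refine ⟨Nat.card ι, fun j => D.symm (f (e.symm j)), fun j => b (e.symm j), ?_⟩
    ext x
    simp [hdot, e.symm.surjective.forall]

theorem interior_setOf_forall_le {E K : Type*} [NormedAddCommGroup E] [NormedSpace ℝ E]
    [FiniteDimensional ℝ E] [Finite K] {f : K → E →ₗ[ℝ] ℝ} (hf : ∀ k, f k ≠ 0) (b : K → ℝ) :
    interior {x | ∀ k, f k x ≤ b k} = {x | ∀ k, f k x < b k} := by
  simp only [Set.ofPred_forall, interior_iInter_of_finite]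
  refine Set.iInter_congr fun k => ?_
  have hopen := (f k).isOpenMap_of_finiteDimensional (LinearMap.surjective_of_ne_zero (hf k))
  change interior (f k ⁻¹' Set.Iic (b k)) = f k ⁻¹' Set.Iio (b k)
  rw [← hopen.preimage_interior_eq_interior_preimage (f k).continuous_of_finiteDimensional,
    interior_Iic]

theorem recCone_setOf_forall_le {d : ℕ} {K : Type*} {f : K → (Fin d → ℝ) →ₗ[ℝ] ℝ} {b : K → ℝ}
    (hne : {x | ∀ k, f k x ≤ b k}.Nonempty) :
    recCone {x | ∀ k, f k x ≤ b k} = {u | ∀ k, f k u ≤ 0} := by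
  ext u
  refine ⟨fun hu k => ?_, fun hu x hx k => by simpa using add_le_add (hx k) (hu k)⟩
  obtain ⟨x₀, hx₀⟩ := hne
  have hiter : ∀ n : ℕ, x₀ + (n : ℝ) • u ∈ {x | ∀ k, f k x ≤ b k} := by
    intro n
    induction n with
    | zero => simpa using hx₀
    | succ n ih => rw [Nat.cast_succ, add_smul, one_smul, ← add_assoc]; exact hu _ ih
  by_contra! hpos
  obtain ⟨n, hn⟩ := exists_nat_gt ((b k - f k x₀) / f k u)
  have := hiter n k
  rw [div_lt_iff₀ hpos] at hn
  simp only [map_add, map_smul, smul_eq_mul] at this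
  linarith

theorem eq_zero_of_isLinearSubspaceSet_recCone {d : ℕ} {K : Type*}
    {f : K → (Fin d → ℝ) →ₗ[ℝ] ℝ} {b : K → ℝ} (hne : {x | ∀ k, f k x ≤ b k}.Nonempty)
    (hrec : IsLinearSubspaceSet (recCone {x | ∀ k, f k x ≤ b k})) {u : Fin d → ℝ}
    (hu : ∀ k, f k u ≤ 0) (k : K) : f k u = 0 := by
  obtain ⟨W, hW⟩ := hrec
  rw [recCone_setOf_forall_le hne] at hW
  have hmem : ∀ v, v ∈ W ↔ ∀ k, f k v ≤ 0 := fun v => by rw [← SetLike.mem_coe, ← hW]; rfl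
  have hneg := (hmem _).1 (W.neg_mem ((hmem u).2 hu)) k
  exact le_antisymm (hu k) (by simpa using hneg)

theorem stmt2_general {d : ℕ} (P L : Set (Fin d → ℝ))
    (hP : IsPolyhedron P)
    (hL : IsPolyhedron L)
    (hrec : IsLinearSubspaceSet (recCone L)) :
    IsPolyhedron (convexHull ℝ (P \ interior L)) := by
  rw [isPolyhedron_iff_isPolyhedral] at hP hL ⊢
  rcases L.eq_empty_or_nonempty with rfl | hne
  · rwa [interior_empty, Set.sdiff_empty, hP.convex.convexHull_eq]
  obtain ⟨K, _, f, b, hf, rfl⟩ := hL.exists_rep_ne_zero hne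
  have := Fintype.ofFinite K
  have hdiff : P \ interior {x | ∀ k, f k x ≤ b k} = ⋃ k, P ∩ {x | b k ≤ f k x} := by
    ext x
    simp [interior_setOf_forall_le hf]
  rw [hdiff]
  exact hP.convexHull_iUnion_inter_setOf_le f b
    fun u hu => eq_zero_of_isLinearSubspaceSet_recCone hne hrec hu

theorem stmt2 {d : ℕ} (P L : Set (Fin d → ℝ))
    (hP : IsPolyhedron P) (hPfree : LineFree P)
    (hL : IsPolyhedron L) (hLdim : adim L = d)
    (hrec : IsLinearSubspaceSet (recCone L)) :
    IsPolyhedron (convexHull ℝ (P \ interior L)) :=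
  stmt2_general P L hP hL hrec
end
end

section
/- Let P be a line-free polyhedron in R^d with the set of vertices vx(P) and recession cone rec(P). Then P = conv(vx(P)) + rec(P). -/
open Pointwise

noncomputable section

/-!
For `x` in the polyhedron let `K(x)` be the space of directions along which every constraint
tight at `x` stays tight. If `K(x) = 0`, then `x` is a vertex. Otherwise take `v ≠ 0` in `K(x)`;
as the polyhedron contains no line, some constraint is not constant along `v`, so moving from `x`
along `v` (or `-v`) reaches a point with a new tight constraint and a strictly smaller `K`. If this
happens in both directions, `x` lies on a segment between two such points; if `-v` never leaves
the polyhedron, `-v` lies in the recession cone and `x` is such a point plus a recession vector.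
Induction on `dim K(x)` concludes.
-/

section Polyhedron

variable {E ι : Type*} [AddCommGroup E] [Module ℝ E]

def polyhedron (f : ι → E →ₗ[ℝ] ℝ) (b : ι → ℝ) : Set E := {x | ∀ i, f i x ≤ b i}

/-- The direction space of the smallest face of `polyhedron f b` containing `x`. -/
def activeKernel (f : ι → E →ₗ[ℝ] ℝ) (b : ι → ℝ) (x : E) : Submodule ℝ E :=
  ⨅ (i) (_ : f i x = b i), LinearMap.ker (f i)

variable {f : ι → E →ₗ[ℝ] ℝ} {b : ι → ℝ} {x u : E}

theorem convex_polyhedron (f : ι → E →ₗ[ℝ] ℝ) (b : ι → ℝ) : Convex ℝ (polyhedron f b) := by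
  rw [polyhedron, Set.ofPred_forall]
  exact convex_iInter fun i => convex_halfSpace_le (f i).isLinear (b i)

theorem add_mem_polyhedron (hx : x ∈ polyhedron f b) (hu : u ∈ polyhedron f 0) :
    x + u ∈ polyhedron f b := fun i => by
  simpa [map_add] using add_le_add (hx i) (hu i)

theorem mem_activeKernel : u ∈ activeKernel f b x ↔ ∀ i, f i x = b i → f i u = 0 := by
  simp [activeKernel]

theorem activeKernel_add_smul_le (hu : u ∈ activeKernel f b x) (t : ℝ) :
    activeKernel f b (x + t • u) ≤ activeKernel f b x := fun w hw =>
  mem_activeKernel.2 fun i hi => mem_activeKernel.1 hw i <| by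
    simp [mem_activeKernel.1 hu i hi, hi]

theorem sub_mem_activeKernel_of_mem_openSegment {p q : E} (hp : p ∈ polyhedron f b)
    (hq : q ∈ polyhedron f b) (hx : x ∈ openSegment ℝ p q) : p - x ∈ activeKernel f b x := by
  obtain ⟨s, t, hs, ht, hst, rfl⟩ := hx
  refine mem_activeKernel.2 fun i hi => ?_
  have hcomb : s * f i p + t * f i q = b i := by simpa using hi
  have hb : s * b i + t * b i = b i := by rw [← add_mul, hst, one_mul]
  have hpi : f i p = b i := le_antisymm (hp i) <| le_of_mul_le_mul_left
    (by linarith [mul_le_mul_of_nonneg_left (hq i) ht.le]) hs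
  rw [map_sub, hi, hpi, sub_self]

theorem mem_extremePoints_of_activeKernel_eq_bot (hx : x ∈ polyhedron f b)
    (hK : activeKernel f b x = ⊥) : x ∈ (polyhedron f b).extremePoints ℝ := by
  refine mem_extremePoints.2 ⟨hx, fun p hp q hq hpq => ?_⟩
  have hp' := sub_mem_activeKernel_of_mem_openSegment hp hq hpq
  have hq' := sub_mem_activeKernel_of_mem_openSegment hq hp (openSegment_symm ℝ p q ▸ hpq)
  rw [hK, Submodule.mem_bot, sub_eq_zero] at hp' hq'
  exact ⟨hp', hq'⟩

/-- The step `t` is the largest one keeping `x + t • u` in the polyhedron: the constraint attaining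
it becomes tight, and since it is not constant along `u`, the active kernel loses `u`. -/
theorem exists_add_smul_mem_polyhedron_activeKernel_lt [Finite ι] (hx : x ∈ polyhedron f b)
    (hu : u ∈ activeKernel f b x) {j : ι} (hj : 0 < f j u) :
    ∃ t : ℝ, 0 < t ∧ x + t • u ∈ polyhedron f b ∧
      activeKernel f b (x + t • u) < activeKernel f b x := by
  obtain ⟨k, hk : 0 < f k u, hmin⟩ := Set.exists_min_image {i | 0 < f i u}
    (fun i => (b i - f i x) / f i u) (Set.toFinite _) ⟨j, hj⟩
  have hslack : f k x < b k := (hx k).lt_of_ne fun h => hk.ne' (mem_activeKernel.1 hu k h)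
  set t := (b k - f k x) / f k u
  have ht : 0 < t := div_pos (sub_pos.2 hslack) hk
  have htight : f k (x + t • u) = b k := by
    simp [t, div_mul_cancel₀ _ hk.ne']
  refine ⟨t, ht, fun i => ?_, SetLike.lt_iff_le_and_exists.2
    ⟨activeKernel_add_smul_le hu t, u, hu, fun h => hk.ne' (mem_activeKernel.1 h k htight)⟩⟩
  simp only [map_add, map_smul, smul_eq_mul]
  rcases lt_or_ge 0 (f i u) with hi | hi
  · have := (le_div_iff₀ hi).1 (hmin i hi)
    linarith
  · linarith [hx i, mul_nonpos_of_nonneg_of_nonpos ht.le hi]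

theorem Convex.mem_of_add_smul_mem_of_sub_smul_mem {S : Set E} (hS : Convex ℝ S) {v : E}
    {t s : ℝ} (ht : 0 < t) (hs : 0 < s) (h₁ : x + t • v ∈ S) (h₂ : x - s • v ∈ S) : x ∈ S := by
  have := hS.add_smul_sub_mem h₁ h₂ (t := t / (t + s)) ⟨by positivity, by
    rw [div_le_one (by positivity)]; linarith⟩
  convert this using 1
  match_scalars <;> field_simp <;> ring

theorem polyhedron_subset_convexHull_extremePoints_add [FiniteDimensional ℝ E] [Finite ι]
    (hline : ∀ x v, (∀ t : ℝ, x + t • v ∈ polyhedron f b) → v = 0) :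
    polyhedron f b ⊆ convexHull ℝ ((polyhedron f b).extremePoints ℝ) + polyhedron f 0 := by
  set S := convexHull ℝ ((polyhedron f b).extremePoints ℝ) + polyhedron f 0
  have hS : Convex ℝ S := (convex_convexHull ℝ _).add (convex_polyhedron f 0)
  have hSrec : ∀ y ∈ S, ∀ w ∈ polyhedron f 0, y + w ∈ S := by
    rintro _ ⟨h, hh, c, hc, rfl⟩ w hw
    exact add_assoc h c w ▸ Set.add_mem_add hh (add_mem_polyhedron hc hw)
  intro x hx
  induction hn : Module.finrank ℝ (activeKernel f b x) using Nat.strong_induction_on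
    generalizing x with
  | _ n ih =>
    by_cases hK : activeKernel f b x = ⊥
    · exact add_zero x ▸ Set.add_mem_add
        (subset_convexHull ℝ _ (mem_extremePoints_of_activeKernel_eq_bot hx hK)) fun _ => by simp
    obtain ⟨v, hvK, hv0⟩ := Submodule.exists_mem_ne_zero_of_ne_bot hK
    obtain ⟨i, hi⟩ : ∃ i, f i v ≠ 0 := by
      by_contra! h
      exact hv0 (hline x v fun t i => by simpa [h i] using hx i)
    wlog hpos : 0 < f i v generalizing v
    · exact this (-v) (neg_mem hvK) (neg_ne_zero.2 hv0) (by simpa using hi)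
        (by simpa using lt_of_le_of_ne (not_lt.1 hpos) hi)
    have descend : ∀ y ∈ polyhedron f b, activeKernel f b y < activeKernel f b x → y ∈ S :=
      fun y hy hlt => ih _ (hn ▸ Submodule.finrank_lt_finrank_of_lt hlt) hy rfl
    obtain ⟨t, ht, hyP, hyK⟩ := exists_add_smul_mem_polyhedron_activeKernel_lt hx hvK hpos
    by_cases hneg : ∃ j, f j v < 0
    · obtain ⟨j, hj⟩ := hneg
      obtain ⟨s, hs, hzP, hzK⟩ := exists_add_smul_mem_polyhedron_activeKernel_lt hx
        (neg_mem hvK) (j := j) (by simpa using hj)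
      rw [smul_neg, ← sub_eq_add_neg] at hzP hzK
      exact hS.mem_of_add_smul_mem_of_sub_smul_mem ht hs (descend _ hyP hyK) (descend _ hzP hzK)
    · simp only [not_exists, not_lt] at hneg
      have := hSrec _ (descend _ hyP hyK) (t • -v) fun j => by simpa using mul_nonneg ht.le (hneg j)
      rwa [smul_neg, add_neg_cancel_right] at this

end Polyhedron

theorem isVertex_of_mem_extremePoints {d : ℕ} {P : Set (Fin d → ℝ)} {x : Fin d → ℝ}
    (hx : x ∈ P.extremePoints ℝ) : IsVertex P x :=
  ⟨Set.singleton_subset_iff.2 hx.1, convex_singleton x, fun p hp q hq t ht0 ht1 hpq =>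
    (mem_extremePoints.1 hx).2 p hp q hq ⟨t, 1 - t, ht0, sub_pos.2 ht1, add_sub_cancel t 1, hpq⟩⟩

theorem polyhedron_zero_subset_recCone {d : ℕ} {ι : Type*} (f : ι → (Fin d → ℝ) →ₗ[ℝ] ℝ)
    (b : ι → ℝ) : polyhedron f 0 ⊆ recCone (polyhedron f b) :=
  fun _ hu _ hx => add_mem_polyhedron hx hu

theorem stmt3 {d : ℕ} (P : Set (Fin d → ℝ))
    (hP : IsPolyhedron P) (hPfree : LineFree P) :
    P = convexHull ℝ {x | IsVertex P x} + recCone P := by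
  obtain ⟨n, a, b, hPab⟩ := hP
  obtain rfl : P = polyhedron (fun i => dotProductBilin ℝ ℝ (a i)) b := hPab
  apply Set.Subset.antisymm
  · refine (polyhedron_subset_convexHull_extremePoints_add fun x v hxv =>
      by_contra fun hv => hPfree ⟨x, v, hv, hxv⟩).trans ?_
    exact Set.add_subset_add (convexHull_mono fun _ => isVertex_of_mem_extremePoints)
      (polyhedron_zero_subset_recCone _ b)
  · rintro _ ⟨p, hp, w, hw, rfl⟩
    exact hw p (convexHull_min (fun y hy => hy.1 rfl) (convex_polyhedron _ b) hp)
end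
end

section
/- Let L be a d-dimensional rational polytope in R^d with max-facet-width m(L) = m, i.e., L can be written as {x ∈ R^d : b_i − m ≤ ⟨a_i, x⟩ ≤ b_i, i ∈ [n]} with a_i ∈ Z^d \ {0} and b_i ∈ Z. Then vol(L) ≤ m^d. -/
open Pointwise

noncomputable section

/-! If the normals `aᵢ` did not span `ℝ^d`, the bounded set `L` would contain a line; so `d` of
them form an integer matrix `A` with `det A ≠ 0`. Then `L` lies in the preimage under `A` of a
box with side `m`, which has volume `m^d / |det A| ≤ m^d`. -/

open MeasureTheory Set Matrix

theorem dot_eq_dotProduct {d : ℕ} (a x : Fin d → ℝ) : dot a x = a ⬝ᵥ x := rfl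

theorem hasWidthRep_of_mfw_eq {d : ℕ} {L : Set (Fin d → ℝ)} {m : ℕ} (hm : mfw L = m) :
    HasWidthRep L m := by
  have hne : {k : ℕ∞ | ∃ k' : ℕ, k = k' ∧ HasWidthRep L k'}.Nonempty := by
    by_contra h
    rw [not_nonempty_iff_eq_empty] at h
    simp [mfw, h] at hm
  obtain ⟨k, hk, hrep⟩ := csInf_mem hne
  rw [← mfw, hm, Nat.cast_inj] at hk
  exact hk ▸ hrep

theorem Bornology.IsBounded.eq_zero_of_forall_add_smul_mem {E : Type*} [NormedAddCommGroup E]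
    [NormedSpace ℝ E] {L : Set E} (hb : Bornology.IsBounded L) {x u : E}
    (hx : ∀ t : ℝ, x + t • u ∈ L) : u = 0 := by
  by_contra hu
  obtain ⟨R, hR⟩ := isBounded_iff_forall_norm_le.mp hb
  have hR0 : 0 ≤ R := (norm_nonneg _).trans (hR _ (hx 0))
  set t := (R + ‖x‖ + 1) / ‖u‖
  have htu : ‖t • u‖ = R + ‖x‖ + 1 := by
    rw [norm_smul, Real.norm_of_nonneg (by positivity),
      div_mul_cancel₀ _ (norm_ne_zero_iff.mpr hu)]
  have := norm_sub_le (x + t • u) x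
  rw [add_sub_cancel_left] at this
  linarith [hR _ (hx t)]

theorem span_range_eq_top_of_isBounded {d : ℕ} {ι : Type*} (v : ι → Fin d → ℝ)
    {L : Set (Fin d → ℝ)} (hb : Bornology.IsBounded L) (hne : L.Nonempty)
    (hL : ∀ x ∈ L, ∀ u, (∀ i, v i ⬝ᵥ u = 0) → x + u ∈ L) :
    Submodule.span ℝ (range v) = ⊤ := by
  by_contra h
  obtain ⟨f, hf, hker⟩ := Submodule.exists_dual_map_eq_bot_of_lt_top (lt_top_iff_ne_top.mpr h)
    inferInstance
  set u := (dotProductEquiv ℝ (Fin d)).symm f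
  have hfu : ∀ y, f y = u ⬝ᵥ y := fun y => by
    rw [← dotProductEquiv_apply_apply, LinearEquiv.apply_symm_apply]
  have hvu : ∀ i, v i ⬝ᵥ u = 0 := fun i => by
    rw [dotProduct_comm, ← hfu, ← Submodule.mem_bot ℝ, ← hker]
    exact Submodule.mem_map_of_mem (Submodule.subset_span (mem_range_self i))
  obtain ⟨x, hx⟩ := hne
  have hu : u = 0 := hb.eq_zero_of_forall_add_smul_mem fun t =>
    hL x hx _ fun i => by rw [dotProduct_smul, hvu, smul_zero]
  exact hf (LinearMap.ext fun y => by rw [hfu, hu, zero_dotProduct, LinearMap.zero_apply])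

theorem exists_det_ne_zero_of_span_eq_top {K ι : Type*} [Field K] {d : ℕ} (v : ι → Fin d → K)
    (h : Submodule.span K (range v) = ⊤) :
    ∃ r : Fin d → ι, (Matrix.of fun j => v (r j)).det ≠ 0 := by
  obtain ⟨κ, a, -, hspan, hli⟩ := exists_linearIndependent' K v
  let B := Module.Basis.mk hli (by rw [hspan, h])
  let e := (Pi.basisFun K (Fin d)).indexEquiv B
  refine ⟨a ∘ e, ?_⟩
  rw [← isUnit_iff_ne_zero, ← Matrix.isUnit_iff_isUnit_det,
    ← Matrix.linearIndependent_rows_iff_isUnit]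
  exact hli.comp e e.injective

theorem volume_preimage_intMatrix_mulVec_le {ι : Type*} [Fintype ι] [DecidableEq ι]
    (A : Matrix ι ι ℤ) (hA : A.det ≠ 0) (s : Set (ι → ℝ)) :
    volume ((A.map ((↑) : ℤ → ℝ) *ᵥ ·) ⁻¹' s) ≤ volume s := by
  have hdet : (1 : ℝ) ≤ |(A.map ((↑) : ℤ → ℝ)).det| := by
    rw [← Int.cast_det, ← Int.cast_abs]; exact_mod_cast Int.one_le_abs hA
  have hdet0 : LinearMap.det (toLin' (A.map ((↑) : ℤ → ℝ))) ≠ 0 := by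
    rw [LinearMap.det_toLin']; exact abs_pos.mp (one_pos.trans_le hdet)
  calc volume ((A.map ((↑) : ℤ → ℝ) *ᵥ ·) ⁻¹' s)
      = ENNReal.ofReal |(A.map ((↑) : ℤ → ℝ)).det|⁻¹ * volume s := by
        rw [← abs_inv, ← LinearMap.det_toLin', ← Measure.addHaar_preimage_linearMap _ hdet0]
        rfl
    _ ≤ 1 * volume s := by
        gcongr
        exact ENNReal.ofReal_le_one.mpr (inv_le_one_of_one_le₀ hdet)
    _ = volume s := one_mul _

theorem volume_Icc_sub_const_pi {ι : Type*} [Fintype ι] (c : ι → ℝ) {w : ℝ} :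
    volume (Icc (fun i => c i - w) c) = ENNReal.ofReal w ^ Fintype.card ι := by
  simp [Real.volume_Icc_pi]

theorem stmt6_general {d : ℕ} (L : Set (Fin d → ℝ)) (m : ℕ)
    (hb : Bornology.IsBounded L)
    (hm : mfw L = (m : ℕ∞)) :
    MeasureTheory.volume L ≤ (m : ENNReal) ^ d := by
  obtain ⟨n, a, b, -, hL⟩ := hasWidthRep_of_mfw_eq hm
  rcases L.eq_empty_or_nonempty with rfl | hne
  · simp
  have hspan : Submodule.span ℝ (range fun i j => (a i j : ℝ)) = ⊤ :=
    span_range_eq_top_of_isBounded _ hb hne fun x hx u hu => by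
      rw [hL] at hx ⊢
      intro i
      simpa only [dot_eq_dotProduct, dotProduct_add, hu, add_zero] using hx i
  obtain ⟨r, hr⟩ := exists_det_ne_zero_of_span_eq_top _ hspan
  set A : Matrix (Fin d) (Fin d) ℤ := Matrix.of fun j => a (r j)
  have hA : A.det ≠ 0 := by exact_mod_cast (Int.cast_det (R := ℝ) A).trans_ne hr
  have hbox :
      L ⊆ (A.map ((↑) : ℤ → ℝ) *ᵥ ·) ⁻¹' Icc (fun j => (b (r j) : ℝ) - m) fun j => b (r j) :=
    fun x hx => by
      rw [hL] at hx
      exact ⟨fun j => (hx (r j)).1, fun j => (hx (r j)).2⟩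
  calc volume L
      ≤ volume (Icc (fun j => (b (r j) : ℝ) - m) fun j => b (r j)) :=
        (measure_mono hbox).trans (volume_preimage_intMatrix_mulVec_le A hA _)
    _ = (m : ENNReal) ^ d := by simp [volume_Icc_sub_const_pi]

theorem stmt6 {d : ℕ} (L : Set (Fin d → ℝ)) (m : ℕ)
    (hL : IsRationalPolyhedron L) (hb : Bornology.IsBounded L)
    (hdim : adim L = d)
    (hm : mfw L = (m : ℕ∞)) :
    MeasureTheory.volume L ≤ (m : ENNReal) ^ d :=
  stmt6_general L m hb hm
end
end

section
/- Let A ∈ Z^{d×d} be a nonsingular integer matrix, b ∈ Z^d, and define the affine map φ(x) = Ax + b. Then for every d-dimensional rational polyhedron P in R^d whose recession cone is a linear space, m(φ^{-1}(P)) ≤ m(P), where m denotes max-facet-width. -/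
open Pointwise

noncomputable section

theorem stmt7 {d : ℕ} (A : Matrix (Fin d) (Fin d) ℤ) (hA : A.det ≠ 0)
    (b : Fin d → ℤ)
    (φ : (Fin d → ℝ) → (Fin d → ℝ))
    (hφ : φ = fun x => (A.map (Int.cast : ℤ → ℝ)).mulVec x + fun i => (b i : ℝ))
    (P : Set (Fin d → ℝ))
    (hP : IsRationalPolyhedron P) (hdim : adim P = d)
    (hrec : IsLinearSubspaceSet (recCone P)) :
    mfw (φ ⁻¹' P) ≤ mfw P := by
  apply sInf_le_sInf
  rintro m ⟨k, rfl, n, a, b0, ha, hPeq⟩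
  refine ⟨k, rfl, n, fun i => A.transpose.mulVec (a i),
    fun i => b0 i - ∑ j, a i j * b j, ?_, ?_⟩
  · intro i h
    apply ha i
    have h2 : A.det • a i = 0 := by
      have h3 := congrArg (fun v => (A.transpose.adjugate).mulVec v) h
      simp only [Matrix.mulVec_mulVec, Matrix.adjugate_mul, Matrix.det_transpose,
        Matrix.smul_mulVec, Matrix.one_mulVec, Matrix.mulVec_zero] at h3
      exact h3
    funext j
    have := congrFun h2 j
    simp only [Pi.smul_apply, smul_eq_mul, Pi.zero_apply] at this
    rcases mul_eq_zero.mp this with h' | h'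
    · exact absurd h' hA
    · exact h'
  · have key : ∀ (i : Fin n) (x : Fin d → ℝ),
        dot (fun j => ((a i j : ℤ) : ℝ)) (φ x) =
        dot (fun j => ((A.transpose.mulVec (a i)) j : ℝ)) x + ((∑ j, a i j * b j : ℤ) : ℝ) := by
      intro i x
      simp only [hφ, dot, Matrix.mulVec, dotProduct, Matrix.map_apply,
        Matrix.transpose_apply, Pi.add_apply]
      push_cast
      simp only [mul_add, Finset.sum_add_distrib]
      congr 1
      simp only [Finset.mul_sum, Finset.sum_mul]
      rw [Finset.sum_comm]
      refine Finset.sum_congr rfl fun l _ => Finset.sum_congr rfl fun j _ => by ring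
    ext x
    simp only [Set.mem_preimage, hPeq, Set.mem_setOf_eq]
    constructor
    · intro hx i
      have h1 := hx i
      have h2 := key i x
      push_cast at h2 ⊢
      constructor <;> linarith [h1.1, h1.2]
    · intro hx i
      have h1 := hx i
      have h2 := key i x
      push_cast at h1 h2
      constructor <;> linarith [h1.1, h1.2]
end
end

section
/- Let P be a polyhedron in R^d containing an affine line in direction v (i.e., v ∈ rec(P) ∩ (−rec(P)), v ≠ 0), and let L be a d-dimensional polyhedron with v ∉ rec(L) and rec(L) a linear space. Then conv(P \ int(L)) = P. -/
open Pointwise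

noncomputable section

lemma dot_add' {d : ℕ} (a x y : Fin d → ℝ) : dot a (x + y) = dot a x + dot a y := by
  simp [dot, mul_add, Finset.sum_add_distrib]

lemma dot_smul' {d : ℕ} (a : Fin d → ℝ) (t : ℝ) (x : Fin d → ℝ) :
    dot a (t • x) = t * dot a x := by
  simp [dot, Finset.mul_sum, mul_left_comm]

theorem stmt10 {d : ℕ} (P L : Set (Fin d → ℝ))
    (hP : IsPolyhedron P)
    (v : Fin d → ℝ) (hv : v ≠ 0)
    (hv1 : v ∈ recCone P) (hv2 : -v ∈ recCone P)
    (hL : IsPolyhedron L) (hLdim : adim L = d)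
    (hrec : IsLinearSubspaceSet (recCone L))
    (hvL : v ∉ recCone L) :
    convexHull ℝ (P \ interior L) = P := by
  -- -v is also not in the recession cone of L
  have hvL' : -v ∉ recCone L := by
    obtain ⟨W, hW⟩ := hrec
    rw [hW] at hvL ⊢
    intro h
    exact hvL (by simpa using W.neg_mem h)
  obtain ⟨n, A, b, hLrep⟩ := hL
  obtain ⟨m, c, e, hPrep⟩ := hP
  have hPmem : ∀ y : Fin d → ℝ, y ∈ P ↔ ∀ k, dot (c k) y ≤ e k := by
    intro y; rw [hPrep]; rfl
  have hLmem : ∀ y : Fin d → ℝ, y ∈ L ↔ ∀ k, dot (A k) y ≤ b k := by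
    intro y; rw [hLrep]; rfl
  -- convexity of P
  have hPconv : Convex ℝ P := by
    intro x hx y hy s t hs ht hst
    rw [hPmem] at hx hy ⊢
    intro k
    have hx' := hx k
    have hy' := hy k
    rw [dot_add', dot_smul', dot_smul']
    have h3 : s * e k + t * e k = e k := by rw [← add_mul, hst, one_mul]
    linarith [mul_le_mul_of_nonneg_left hx' hs, mul_le_mul_of_nonneg_left hy' ht, h3]
  -- there is a constraint of L violated in direction v
  have h1 : ∃ i, 0 < dot (A i) v := by
    by_contra h
    push_neg at h
    apply hvL
    intro x hx
    rw [hLmem] at hx ⊢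
    intro k
    rw [dot_add']
    linarith [h k, hx k]
  -- and one violated in direction -v
  have h2 : ∃ j, dot (A j) v < 0 := by
    by_contra h
    push_neg at h
    apply hvL'
    intro x hx
    rw [hLmem] at hx ⊢
    intro k
    have hneg : dot (A k) (-v) = -dot (A k) v := by simp [dot]
    rw [dot_add', hneg]
    linarith [h k, hx k]
  obtain ⟨i, hi⟩ := h1
  obtain ⟨j, hj⟩ := h2
  apply Set.Subset.antisymm
  · exact convexHull_min Set.diff_subset hPconv
  · intro x hx
    -- x + n • w ∈ P for all naturals n, for w in the recession cone
    have hiter : ∀ (w : Fin d → ℝ), w ∈ recCone P → ∀ N : ℕ, x + (N : ℝ) • w ∈ P := by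
      intro w hw N
      induction N with
      | zero => simpa using hx
      | succ N ih =>
        have := hw _ ih
        have heq : x + ((N : ℝ) + 1) • w = (x + (N : ℝ) • w) + w := by
          rw [add_smul, one_smul]; abel
        push_cast
        rw [heq]
        exact this
    -- each constraint of P is orthogonal to v
    have hzero : ∀ k, dot (c k) v = 0 := by
      intro k
      have hle : ∀ (w : Fin d → ℝ), w ∈ recCone P → dot (c k) w ≤ 0 := by
        intro w hw
        by_contra h
        push_neg at h
        obtain ⟨N, hN⟩ := exists_nat_gt ((e k - dot (c k) x) / dot (c k) w)
        have hmem := (hPmem _).mp (hiter w hw N) k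
        rw [dot_add', dot_smul'] at hmem
        rw [div_lt_iff₀ h] at hN
        linarith
      have ha := hle v hv1
      have hb := hle (-v) hv2
      have hneg : dot (c k) (-v) = -dot (c k) v := by simp [dot]
      rw [hneg] at hb
      linarith
    -- so the whole line x + t v lies in P
    have hline : ∀ t : ℝ, x + t • v ∈ P := by
      intro t
      rw [hPmem]
      intro k
      rw [dot_add', dot_smul', hzero k]
      have := (hPmem x).mp hx k
      linarith
    -- choose a large step size
    set M : ℝ := max 0 (max ((b i - dot (A i) x) / dot (A i) v)
      ((b j - dot (A j) x) / (-(dot (A j) v)))) with hM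
    set s : ℝ := 1 + M with hs
    have hM0 : 0 ≤ M := le_max_left _ _
    have hs0 : 0 < s := by rw [hs]; linarith
    have hsi : (b i - dot (A i) x) / dot (A i) v < s := by
      have h1 := (le_max_left ((b i - dot (A i) x) / dot (A i) v)
        ((b j - dot (A j) x) / (-(dot (A j) v)))).trans (le_max_right 0 _)
      rw [hs]; linarith [h1, hM.le, hM.ge]
    have hsj : (b j - dot (A j) x) / (-(dot (A j) v)) < s := by
      have h1 := (le_max_right ((b i - dot (A i) x) / dot (A i) v)
        ((b j - dot (A j) x) / (-(dot (A j) v)))).trans (le_max_right 0 _)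
      rw [hs]; linarith [h1, hM.le, hM.ge]
    have hpi : b i < dot (A i) x + s * dot (A i) v := by
      rw [div_lt_iff₀ hi] at hsi
      linarith
    have hqj : b j < dot (A j) x + (-s) * dot (A j) v := by
      rw [div_lt_iff₀ (by linarith : (0:ℝ) < -(dot (A j) v))] at hsj
      linarith
    -- the two endpoints
    have hp : x + s • v ∈ P \ interior L := by
      refine ⟨hline s, fun hmem => ?_⟩
      have hin := (hLmem _).mp (interior_subset hmem) i
      rw [dot_add', dot_smul'] at hin
      linarith
    have hq : x + (-s) • v ∈ P \ interior L := by
      refine ⟨hline (-s), fun hmem => ?_⟩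
      have hin := (hLmem _).mp (interior_subset hmem) j
      rw [dot_add', dot_smul'] at hin
      linarith
    have hxeq : x = (1/2 : ℝ) • (x + s • v) + (1/2 : ℝ) • (x + (-s) • v) := by
      module
    rw [hxeq]
    exact (convex_convexHull ℝ _) (subset_convexHull ℝ _ hp) (subset_convexHull ℝ _ hq)
      (by norm_num) (by norm_num) (by norm_num)
end
end

section
/- For every d ∈ N, the cross-polytope C_d = {x ∈ R^d : |2x_1 − 1| + ... + |2x_d − 1| ≤ d} is maximal lattice-free, i.e., C_d is d-dimensional, its interior contains no point of Z^d, and it is not properly contained in any other closed convex set with this property. -/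
open Pointwise

noncomputable section

/-! `C_d` is the ℓ¹-ball of radius `d/2` about the centre of the unit cube, i.e. the sublevel set
`crossGauge ≤ d`; its interior is `crossGauge < d`, while every integral point has each coordinate
at distance at least `1/2` from the centre, hence `crossGauge ≥ d`. For maximality, take `y ∉ C_d`
in a lattice-free `L ⊇ C_d` and let `z` be the cube vertex nearest to `y`. Moving from `y` through
`z` a little further lands at a point `p` with `crossGauge p < d`, so `z` lies strictly between
`y ∈ L` and the interior point `p` of `L`, and the integral point `z` is interior to `L`. -/

open Topology

section CrossPolytope

variable {ι : Type*} [Fintype ι]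

def crossGauge (x : ι → ℝ) : ℝ := ∑ i, |2 * x i - 1|

theorem continuous_crossGauge : Continuous (crossGauge : (ι → ℝ) → ℝ) := by
  unfold crossGauge
  fun_prop

theorem convexOn_crossGauge : ConvexOn ℝ Set.univ (crossGauge : (ι → ℝ) → ℝ) := by
  refine ⟨convex_univ, fun x _ y _ a b ha hb hab => ?_⟩
  calc crossGauge (a • x + b • y)
      = ∑ i, |a * (2 * x i - 1) + b * (2 * y i - 1)| := by
        refine Finset.sum_congr rfl fun i _ => congrArg abs ?_
        simp only [Pi.add_apply, Pi.smul_apply, smul_eq_mul]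
        linear_combination hab
    _ ≤ ∑ i, (a * |2 * x i - 1| + b * |2 * y i - 1|) := by
        refine Finset.sum_le_sum fun i _ => (abs_add_le _ _).trans_eq ?_
        rw [abs_mul, abs_mul, abs_of_nonneg ha, abs_of_nonneg hb]
    _ = a • crossGauge x + b • crossGauge y := by
        simp only [crossGauge, Finset.sum_add_distrib, Finset.mul_sum, smul_eq_mul]

theorem crossGauge_lineMap_center (x : ι → ℝ) (t : ℝ) :
    crossGauge (AffineMap.lineMap (fun _ => 1 / 2) x t) = |t| * crossGauge x := by
  simp only [crossGauge, Finset.mul_sum, ← abs_mul, AffineMap.lineMap_apply_module]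
  refine Finset.sum_congr rfl fun i _ => congrArg abs ?_
  simp only [Pi.add_apply, Pi.smul_apply, smul_eq_mul]
  ring

theorem setOf_crossGauge_lt_subset_interior (r : ℝ) :
    {x : ι → ℝ | crossGauge x < r} ⊆ interior {x | crossGauge x ≤ r} :=
  interior_maximal (Set.ofPred_subset_ofPred.2 fun _ => le_of_lt)
    (isOpen_lt continuous_crossGauge continuous_const)

theorem interior_setOf_crossGauge_le {r : ℝ} (hr : 0 < r) :
    interior {x : ι → ℝ | crossGauge x ≤ r} = {x | crossGauge x < r} := by
  refine subset_antisymm (fun x hx => show crossGauge x < r from ?_)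
    (setOf_crossGauge_lt_subset_interior r)
  by_contra! hrx
  -- beyond `x` on the ray from the centre, `crossGauge` keeps growing linearly
  have hnear : ∀ᶠ t in 𝓝[>] (1 : ℝ),
      AffineMap.lineMap (fun _ => 1 / 2) x t ∈ {x : ι → ℝ | crossGauge x ≤ r} :=
    nhdsWithin_le_nhds <| (AffineMap.lineMap_continuous.tendsto' 1 x
      (AffineMap.lineMap_apply_one _ _)) (mem_interior_iff_mem_nhds.1 hx)
  obtain ⟨t, hle, ht⟩ := (hnear.and self_mem_nhdsWithin).exists
  rw [Set.mem_ofPred_eq, crossGauge_lineMap_center, abs_of_pos (zero_lt_one.trans ht)] at hle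
  nlinarith

theorem card_le_crossGauge_intCast (z : ι → ℤ) :
    (Fintype.card ι : ℝ) ≤ crossGauge (fun i => (z i : ℝ)) := by
  have hterm : ∀ i, (1 : ℝ) ≤ |2 * (z i : ℝ) - 1| := fun i => by
    exact_mod_cast Int.one_le_abs (by omega : 2 * z i - 1 ≠ 0)
  simpa [crossGauge] using Finset.card_nsmul_le_sum Finset.univ _ 1 fun i _ => hterm i

def nearestCubeVertex (y : ι → ℝ) : ι → ℤ := fun i => if 0 ≤ 2 * y i - 1 then 1 else 0

theorem crossGauge_extrapolate_nearestCubeVertex (y : ι → ℝ) {s : ℝ} (hs : 0 ≤ s)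
    (hsy : s * crossGauge y ≤ 1) :
    crossGauge ((1 + s) • (fun i => (nearestCubeVertex y i : ℝ)) - s • y) =
      (1 + s) * Fintype.card ι - s * crossGauge y := by
  have hterm : ∀ i, |2 * ((1 + s) • (fun i => (nearestCubeVertex y i : ℝ)) - s • y) i - 1| =
      1 + s - s * |2 * y i - 1| := fun i => by
    have hle : s * |2 * y i - 1| ≤ 1 := (mul_le_mul_of_nonneg_left
      (Finset.single_le_sum (fun j _ => abs_nonneg (2 * y j - 1)) (Finset.mem_univ i)) hs).trans hsy
    simp only [nearestCubeVertex, Pi.sub_apply, Pi.smul_apply, smul_eq_mul]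
    split_ifs with h
    · rw [abs_of_nonneg h] at hle ⊢
      rw [abs_of_nonneg (by push_cast; nlinarith)]
      push_cast; ring
    · rw [abs_of_neg (not_le.1 h)] at hle ⊢
      rw [abs_of_nonpos (by push_cast; nlinarith)]
      push_cast; ring
  simp only [crossGauge, hterm, Finset.sum_sub_distrib, ← Finset.mul_sum, Finset.sum_const,
    Finset.card_univ, nsmul_eq_mul]
  ring

theorem exists_intCast_mem_interior_of_card_lt_crossGauge {L : Set (ι → ℝ)} (hL : Convex ℝ L)
    (hCL : {x | crossGauge x ≤ Fintype.card ι} ⊆ L) {y : ι → ℝ} (hyL : y ∈ L)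
    (hy : Fintype.card ι < crossGauge y) :
    ∃ z : ι → ℤ, (fun i => (z i : ℝ)) ∈ interior L := by
  set F := crossGauge y
  have hF : 0 < F := (Nat.cast_nonneg _).trans_lt hy
  set z : ι → ℝ := fun i => (nearestCubeVertex y i : ℝ)
  set p := (1 + F⁻¹) • z - F⁻¹ • y
  have hp : p ∈ interior L := by
    refine interior_mono hCL (setOf_crossGauge_lt_subset_interior _ ?_)
    have hcard : F⁻¹ * Fintype.card ι < 1 := by rwa [inv_mul_lt_iff₀ hF, mul_one]
    change crossGauge p < Fintype.card ι
    rw [crossGauge_extrapolate_nearestCubeVertex y (inv_nonneg.2 hF.le)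
      (inv_mul_cancel₀ hF.ne').le, inv_mul_cancel₀ hF.ne']
    linarith
  have hz : (1 + F⁻¹)⁻¹ • p + (F⁻¹ * (1 + F⁻¹)⁻¹) • y = z := by
    ext i
    simp only [p, Pi.add_apply, Pi.sub_apply, Pi.smul_apply, smul_eq_mul]
    field_simp
    ring
  refine ⟨nearestCubeVertex y, show z ∈ interior L from hz ▸ ?_⟩
  exact hL.combo_interior_self_mem_interior hp hyL (by positivity) (by positivity) (by field_simp)

end CrossPolytope

theorem adim_eq_of_interior_nonempty {d : ℕ} {S : Set (Fin d → ℝ)} (hS : (interior S).Nonempty) :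
    adim S = d := by
  have hspan : affineSpan ℝ S = ⊤ :=
    top_unique <| (isOpen_interior.affineSpan_eq_top hS).ge.trans (affineSpan_mono ℝ interior_subset)
  rw [adim, hspan, AffineSubspace.direction_top, finrank_top, Module.finrank_fin_fun]

theorem stmt11 {d : ℕ} (hd : 0 < d)
    (C : Set (Fin d → ℝ))
    (hC : C = {x | ∑ i, |2 * x i - 1| ≤ (d : ℝ)}) :
    MaxLatticeFree C := by
  have hcard : (Fintype.card (Fin d) : ℝ) = d := by rw [Fintype.card_fin]
  change C = {x | crossGauge x ≤ d} at hC
  subst hC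
  have hint := interior_setOf_crossGauge_le (ι := Fin d) (Nat.cast_pos.2 hd : (0 : ℝ) < d)
  refine ⟨⟨isClosed_le continuous_crossGauge continuous_const,
    by simpa using convexOn_crossGauge.convex_le (d : ℝ),
    adim_eq_of_interior_nonempty ⟨fun _ => 1 / 2, by rw [hint]; simpa [crossGauge]⟩, ?_⟩,
    fun L hL hCL => hCL.antisymm fun y hyL => ?_⟩
  · refine Set.eq_empty_iff_forall_notMem.2 fun x ⟨hx, z, hxz⟩ => ?_
    rw [hint, hxz] at hx
    exact (hcard ▸ card_le_crossGauge_intCast z).not_gt hx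
  · by_contra hyC
    obtain ⟨z, hz⟩ := exists_intCast_mem_interior_of_card_lt_crossGauge hL.2.1 (hcard ▸ hCL) hyL
      (hcard ▸ not_le.1 hyC)
    exact hL.2.2.2.subset ⟨hz, z, rfl⟩
end
end

section
/- For d ≥ 3, let A_+^d be the set of a ∈ {−1,1}^d with an even number of −1 entries and P = {x ∈ R^d : ⟨a, x⟩ ≤ d for all a ∈ A_+^d}. Then for every a ∈ A_+^d and x ∈ P one has ⟨a, x⟩ ≥ d − d·2^{d−1}; consequently the max-facet-width of P satisfies m(P) ≤ d·2^{d−1}. -/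
open Pointwise

noncomputable section

namespace Stmt16Aux

open scoped symmDiff

variable {d : ℕ}

/-- The sign vector of a finset: `-1` on the set, `1` off it. -/
def toVec (S : Finset (Fin d)) : Fin d → ℝ := fun i => if i ∈ S then -1 else 1

/-- The finset of even-cardinality subsets of `Fin d`. -/
def E (d : ℕ) : Finset (Finset (Fin d)) := Finset.univ.filter fun S => Even S.card

lemma mem_E {S : Finset (Fin d)} : S ∈ E d ↔ Even S.card := by simp [E]

lemma setOf_toVec (S : Finset (Fin d)) : {i | toVec S i = -1} = (S : Set (Fin d)) := by
  ext i
  simp only [toVec, Set.mem_setOf_eq, Finset.mem_coe]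
  by_cases h : i ∈ S <;> simp [h] <;> norm_num

lemma toVec_mem_Aplus {S : Finset (Fin d)} (hS : S ∈ E d) : toVec S ∈ Aplus d := by
  refine ⟨fun i => ?_, ?_⟩
  · unfold toVec; split <;> simp
  · rw [setOf_toVec, Set.ncard_coe_finset]
    exact mem_E.1 hS

lemma exists_S {a : Fin d → ℝ} (ha : a ∈ Aplus d) : ∃ S ∈ E d, toVec S = a := by
  classical
  refine ⟨Finset.univ.filter (fun i => a i = -1), ?_, ?_⟩
  · rw [mem_E]
    have h1 : {i | a i = -1} = ((Finset.univ.filter (fun i => a i = -1) : Finset (Fin d)) : Set (Fin d)) := by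
      ext i; simp
    have := ha.2
    rwa [h1, Set.ncard_coe_finset] at this
  · funext i
    unfold toVec
    simp only [Finset.mem_filter, Finset.mem_univ, true_and]
    by_cases h : a i = -1
    · simp [h]
    · rcases ha.1 i with h1 | h1
      · rw [if_neg h, h1]
      · exact absurd h1 h

lemma even_card_symmDiff_singleton (i : Fin d) (S : Finset (Fin d)) :
    Even ((S ∆ {i}).card) ↔ ¬ Even S.card := by
  classical
  by_cases h : i ∈ S
  · have hset : S ∆ {i} = S.erase i := by
      ext k
      simp only [Finset.mem_symmDiff, Finset.mem_singleton, Finset.mem_erase]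
      constructor
      · rintro (⟨hk, hki⟩ | ⟨rfl, hk⟩)
        · exact ⟨hki, hk⟩
        · exact absurd h hk
      · rintro ⟨hki, hk⟩; exact Or.inl ⟨hk, hki⟩
    have hc : (S.erase i).card + 1 = S.card := Finset.card_erase_add_one h
    rw [hset, ← hc, Nat.even_add_one, not_not]
  · have hset : S ∆ {i} = insert i S := by
      ext k
      simp only [Finset.mem_symmDiff, Finset.mem_singleton, Finset.mem_insert]
      constructor
      · rintro (⟨hk, hki⟩ | ⟨rfl, hk⟩)
        · exact Or.inr hk
        · exact Or.inl rfl
      · rintro (rfl | hk)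
        · exact Or.inr ⟨rfl, h⟩
        · exact Or.inl ⟨hk, fun hki => h (hki ▸ hk)⟩
    rw [hset, Finset.card_insert_of_notMem h, Nat.even_add_one]

lemma mem_symmDiff_singleton_of_ne {j k : Fin d} (hk : k ≠ j) (S : Finset (Fin d)) :
    k ∈ S ∆ {j} ↔ k ∈ S := by
  simp only [Finset.mem_symmDiff, Finset.mem_singleton]
  constructor
  · rintro (⟨h, _⟩ | ⟨rfl, _⟩)
    · exact h
    · exact absurd rfl hk
  · intro h; exact Or.inl ⟨h, hk⟩

lemma card_E (hd : 1 ≤ d) : (E d).card = 2 ^ (d - 1) := by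
  classical
  set i0 : Fin d := ⟨0, hd⟩ with hi0
  set O : Finset (Finset (Fin d)) := Finset.univ.filter fun S : Finset (Fin d) => ¬ Even S.card with hO
  have h1 : (E d).card + O.card = 2 ^ d := by
    rw [E, hO, Finset.card_filter_add_card_filter_not, Finset.card_univ,
      Fintype.card_finset, Fintype.card_fin]
  have h2 : (E d).card = O.card := by
    refine Finset.card_bij' (fun S _ => S ∆ {i0}) (fun S _ => S ∆ {i0}) ?_ ?_ ?_ ?_
    · intro S hS
      rw [hO, Finset.mem_filter]
      exact ⟨Finset.mem_univ _, by rw [even_card_symmDiff_singleton]; exact not_not_intro (mem_E.1 hS)⟩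
    · intro S hS
      rw [mem_E]
      rw [hO, Finset.mem_filter] at hS
      rw [even_card_symmDiff_singleton]
      exact hS.2
    · intro S _; exact symmDiff_symmDiff_cancel_right {i0} S
    · intro S _; exact symmDiff_symmDiff_cancel_right {i0} S
  have h3 : 2 ^ d = 2 * 2 ^ (d - 1) := by
    rw [← pow_succ']
    congr 1
    omega
  omega

lemma sum_toVec_eq_zero (hd : 2 ≤ d) (i : Fin d) :
    ∑ S ∈ E d, toVec S i = 0 := by
  classical
  have hnt : Nontrivial (Fin d) := Fin.nontrivial_iff_two_le.mpr hd
  obtain ⟨j, hji⟩ := exists_ne i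
  have hmem : ∀ S : Finset (Fin d), i ∈ (S ∆ {i}) ∆ {j} ↔ i ∉ S := by
    intro S
    rw [mem_symmDiff_singleton_of_ne (fun h => hji h.symm)]
    simp [Finset.mem_symmDiff]
  refine Finset.sum_involution (fun S _ => (S ∆ {i}) ∆ {j}) ?_ ?_ ?_ ?_
  · intro S _
    unfold toVec
    by_cases h : i ∈ S <;> simp [h, (hmem S).2, hmem]
  · intro S _ _ hc
    have hc' : S ∆ {i} ∆ {j} = S := hc
    have h2 : i ∈ (S ∆ {i}) ∆ {j} ↔ i ∈ S := by rw [hc']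
    rw [hmem S] at h2
    tauto
  · intro S hS
    rw [mem_E] at hS ⊢
    rw [even_card_symmDiff_singleton, even_card_symmDiff_singleton, not_not]
    exact hS
  · intro S _
    show S ∆ {i} ∆ {j} ∆ {i} ∆ {j} = S
    rw [symmDiff_right_comm (S ∆ {i}) {j} {i},
      symmDiff_symmDiff_cancel_right, symmDiff_symmDiff_cancel_right]

lemma key (hd : 3 ≤ d) (x : Fin d → ℝ) (hx : ∀ S ∈ E d, dot (toVec S) x ≤ (d : ℝ))
    {S₀ : Finset (Fin d)} (hS₀ : S₀ ∈ E d) :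
    (d : ℝ) - d * 2 ^ (d - 1) ≤ dot (toVec S₀) x := by
  classical
  have hsum : ∑ S ∈ E d, dot (toVec S) x = 0 := by
    unfold dot
    rw [Finset.sum_comm]
    refine Finset.sum_eq_zero fun i _ => ?_
    rw [← Finset.sum_mul, sum_toVec_eq_zero (by omega) i, zero_mul]
  have hsplit : dot (toVec S₀) x + ∑ S ∈ (E d).erase S₀, dot (toVec S) x = 0 := by
    exact (Finset.add_sum_erase (E d) (fun S => dot (toVec S) x) hS₀).trans hsum
  have hbound : ∑ S ∈ (E d).erase S₀, dot (toVec S) x ≤ ((E d).erase S₀).card • (d : ℝ) :=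
    Finset.sum_le_card_nsmul _ _ _ (fun S hS => hx S (Finset.mem_of_mem_erase hS))
  have hcard : ((E d).erase S₀).card = 2 ^ (d - 1) - 1 := by
    rw [Finset.card_erase_of_mem hS₀, card_E (by omega)]
  rw [hcard, nsmul_eq_mul] at hbound
  have hpow : (1:ℕ) ≤ 2 ^ (d-1) := Nat.one_le_two_pow
  have hc : ((2 ^ (d - 1) - 1 : ℕ) : ℝ) = 2 ^ (d-1) - 1 := by
    rw [Nat.cast_sub hpow]
    push_cast
    ring
  rw [hc] at hbound
  nlinarith [hbound, hsplit]

lemma hx_all (hd : 3 ≤ d) {P : Set (Fin d → ℝ)}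
    (hP : P = {x | ∀ a ∈ Aplus d, dot a x ≤ (d : ℝ)}) {x : Fin d → ℝ} (hx : x ∈ P) :
    ∀ S ∈ E d, dot (toVec S) x ≤ (d : ℝ) := by
  intro S hS
  rw [hP] at hx
  exact hx (toVec S) (toVec_mem_Aplus hS)

end Stmt16Aux

theorem stmt16 {d : ℕ} (hd : 3 ≤ d)
    (P : Set (Fin d → ℝ))
    (hP : P = {x | ∀ a ∈ Aplus d, dot a x ≤ (d : ℝ)}) :
    (∀ a ∈ Aplus d, ∀ x ∈ P, (d : ℝ) - d * 2 ^ (d - 1) ≤ dot a x) ∧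
      mfw P ≤ ((d * 2 ^ (d - 1) : ℕ) : ℕ∞) := by
  classical
  open Stmt16Aux in
  have part1 : ∀ a ∈ Aplus d, ∀ x ∈ P, (d : ℝ) - d * 2 ^ (d - 1) ≤ dot a x := by
    intro a ha x hx
    obtain ⟨S, hS, rfl⟩ := exists_S ha
    exact key hd x (hx_all hd hP hx) hS
  open Stmt16Aux in
  refine ⟨part1, ?_⟩
  have hrep : HasWidthRep P (d * 2 ^ (d - 1)) := by
    refine ⟨(E d).card,
      (fun i j => if j ∈ ((E d).equivFin.symm i : Finset (Fin d)) then -1 else 1),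
      (fun _ => (d : ℤ)), ?_, ?_⟩
    · intro i h
      have h0 := congrFun h ⟨0, by omega⟩
      simp only [Pi.zero_apply] at h0
      split at h0 <;> omega
    · ext x
      simp only [Set.mem_setOf_eq]
      constructor
      · intro hx i
        set S : Finset (Fin d) := ((E d).equivFin.symm i : Finset (Fin d)) with hSdef
        have hSmem : S ∈ E d := Finset.coe_mem _
        have hcast : (fun j => (((if j ∈ S then (-1:ℤ) else 1) : ℤ) : ℝ)) = toVec S := by
          funext j
          simp [toVec, apply_ite (fun z : ℤ => (z : ℝ))]
        rw [hcast]
        constructor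
        · have hkey := key hd x (hx_all hd hP hx) hSmem
          have hc2 : ((d : ℤ) : ℝ) - ((d * 2 ^ (d - 1) : ℕ) : ℝ) = (d : ℝ) - d * 2 ^ (d - 1) := by
            push_cast
            ring
          rw [hc2]
          exact hkey
        · have := hx_all hd hP hx S hSmem
          simpa using this
      · intro hx
        rw [hP]
        intro a ha
        obtain ⟨S, hS, rfl⟩ := exists_S ha
        have h2 := (hx ((E d).equivFin ⟨S, hS⟩)).2
        have hsymm : (((E d).equivFin.symm ((E d).equivFin ⟨S, hS⟩)) : Finset (Fin d)) = S := by
          rw [Equiv.symm_apply_apply]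
        rw [hsymm] at h2
        have hcast : (fun j => (((if j ∈ S then (-1:ℤ) else 1) : ℤ) : ℝ)) = toVec S := by
          funext j
          simp [toVec, apply_ite (fun z : ℤ => (z : ℝ))]
        rw [hcast] at h2
        simpa using h2
  exact sInf_le ⟨d * 2 ^ (d - 1), rfl, hrep⟩
end
end

section
/- Let d ≥ 3 and for each integer k ≥ 2d define φ_k(x) = (2x_1 − 1, ..., 2x_{d−1} − 1, k·x_d) and L_k = φ_k^{-1}(P), where P = {x ∈ R^d : ⟨a, x⟩ ≤ d for all a ∈ A_+^d} and A_+^d is the set of ±1 vectors with an even number of −1 entries. Then L_k ∩ Z^d = {0,1}^{d−1} × {0}; in particular dim(conv(L_k ∩ Z^d)) = d − 1. -/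
open Pointwise

noncomputable section

lemma prod_pm {ι : Type*} {s : Finset ι} {f : ι → ℝ} (h : ∀ i ∈ s, f i = 1 ∨ f i = -1) :
    (∏ i ∈ s, f i) = 1 ∨ (∏ i ∈ s, f i) = -1 := by
  refine Finset.prod_induction f (fun x => x = 1 ∨ x = -1) ?_ (Or.inl rfl) h
  rintro a b (rfl|rfl) (rfl|rfl) <;> norm_num

lemma mem_Aplus_of_prod {d : ℕ} {a : Fin d → ℝ} (h : ∀ i, a i = 1 ∨ a i = -1)
    (hp : ∏ i, a i = 1) : a ∈ Aplus d := by
  refine ⟨h, ?_⟩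
  have hset : {i | a i = -1} = ↑(Finset.univ.filter (fun i => a i = -1)) := by
    ext i; simp
  rw [hset, Set.ncard_coe_finset]
  have hprod : ∏ i, a i = (-1 : ℝ) ^ (Finset.univ.filter (fun i => a i = -1)).card := by
    rw [← Finset.prod_filter_mul_prod_filter_not Finset.univ (fun i => a i = -1)]
    rw [Finset.prod_congr rfl (fun i hi => (Finset.mem_filter.mp hi).2),
      Finset.prod_const]
    have : ∏ i ∈ Finset.univ.filter (fun i => ¬ a i = -1), a i = 1 := by
      apply Finset.prod_eq_one
      intro i hi
      rcases h i with h1 | h1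
      · exact h1
      · exact absurd h1 (Finset.mem_filter.mp hi).2
    rw [this, mul_one]
  rw [hprod] at hp
  exact (neg_one_pow_eq_one_iff_even (by norm_num : (-1:ℝ) ≠ 1)).mp hp

lemma fix1 {d : ℕ} {v : Fin d → ℝ} {C : ℝ} (h : ∀ a ∈ Aplus d, dot a v ≤ C)
    {s : Fin d → ℝ} (hs : ∀ i, s i = 1 ∨ s i = -1) (p : Fin d) (hp : v p = 0) :
    ∑ i, s i * v i ≤ C := by
  set c := ∏ i ∈ Finset.univ.erase p, s i with hc
  have hcpm : c = 1 ∨ c = -1 := prod_pm (fun i _ => hs i)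
  set a := Function.update s p c with ha
  have has : ∀ i, a i = 1 ∨ a i = -1 := by
    intro i
    by_cases hip : i = p
    · subst hip; rw [ha, Function.update_self]; exact hcpm
    · rw [ha, Function.update_of_ne hip]; exact hs i
  have hprod : ∏ i, a i = 1 := by
    rw [← Finset.mul_prod_erase Finset.univ a (Finset.mem_univ p)]
    have h1 : a p = c := Function.update_self p c s
    have h2 : ∏ i ∈ Finset.univ.erase p, a i = c := by
      rw [hc]
      exact Finset.prod_congr rfl (fun i hi =>
        Function.update_of_ne (Finset.ne_of_mem_erase hi) c s)
    rw [h1, h2]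
    rcases hcpm with h3 | h3 <;> rw [h3] <;> norm_num
  have := h a (mem_Aplus_of_prod has hprod)
  rw [dot] at this
  calc ∑ i, s i * v i = ∑ i, a i * v i := by
        refine Finset.sum_congr rfl (fun i _ => ?_)
        by_cases hip : i = p
        · subst hip; rw [hp]; ring
        · rw [ha, Function.update_of_ne hip]
      _ ≤ C := this

lemma drop2 {d : ℕ} {v : Fin d → ℝ} {C : ℝ} (h : ∀ a ∈ Aplus d, dot a v ≤ C)
    {s : Fin d → ℝ} (hs : ∀ i, s i = 1 ∨ s i = -1) {p q : Fin d} (hpq : p ≠ q) :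
    ∑ i ∈ (Finset.univ.erase p).erase q, s i * v i ≤ C := by
  set R := (Finset.univ.erase p).erase q with hR
  set c := ∏ i ∈ R, s i with hc
  have hcpm : c = 1 ∨ c = -1 := prod_pm (fun i _ => hs i)
  have hcc : c * c = 1 := by rcases hcpm with h3 | h3 <;> rw [h3] <;> norm_num
  set a1 : Fin d → ℝ := fun i => if i = p then c else if i = q then 1 else s i with ha1
  set a2 : Fin d → ℝ := fun i => if i = p then -c else if i = q then -1 else s i with ha2
  have hqmem : q ∈ Finset.univ.erase p := Finset.mem_erase.mpr ⟨hpq.symm, Finset.mem_univ q⟩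
  have hErase : ((Finset.univ.erase p).erase q) = R := rfl
  have key : ∀ (f : Fin d → ℝ), ∏ i, f i = f p * (f q * ∏ i ∈ R, f i) := by
    intro f
    rw [← Finset.mul_prod_erase Finset.univ f (Finset.mem_univ p),
      ← Finset.mul_prod_erase _ f hqmem]
  have hRs : ∀ i ∈ R, i ≠ p ∧ i ≠ q := by
    intro i hi
    rw [hR] at hi
    exact ⟨Finset.ne_of_mem_erase (Finset.mem_of_mem_erase hi), Finset.ne_of_mem_erase hi⟩
  have hprodR1 : ∏ i ∈ R, a1 i = c := by
    rw [hc]; exact Finset.prod_congr rfl (fun i hi => by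
      rw [ha1]; simp only [(hRs i hi).1, (hRs i hi).2, if_false])
  have hprodR2 : ∏ i ∈ R, a2 i = c := by
    rw [hc]; exact Finset.prod_congr rfl (fun i hi => by
      rw [ha2]; simp only [(hRs i hi).1, (hRs i hi).2, if_false])
  have ha1s : ∀ i, a1 i = 1 ∨ a1 i = -1 := by
    intro i; rw [ha1]; dsimp only
    split
    · exact hcpm
    · split
      · exact Or.inl rfl
      · exact hs i
  have ha2s : ∀ i, a2 i = 1 ∨ a2 i = -1 := by
    intro i; rw [ha2]; dsimp only
    split
    · rcases hcpm with h3 | h3 <;> rw [h3] <;> [exact Or.inr rfl; exact Or.inl (by norm_num)]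
    · split
      · exact Or.inr rfl
      · exact hs i
  have hp1 : ∏ i, a1 i = 1 := by
    rw [key a1, hprodR1]
    have : a1 p = c := by rw [ha1]; simp
    have hq : a1 q = 1 := by rw [ha1]; simp [hpq.symm]
    rw [this, hq, one_mul, hcc]
  have hp2 : ∏ i, a2 i = 1 := by
    rw [key a2, hprodR2]
    have : a2 p = -c := by rw [ha2]; simp
    have hq : a2 q = -1 := by rw [ha2]; simp [hpq.symm]
    rw [this, hq]; ring_nf; rw [sq]; exact hcc
  have h1 := h a1 (mem_Aplus_of_prod ha1s hp1)
  have h2 := h a2 (mem_Aplus_of_prod ha2s hp2)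
  rw [dot] at h1 h2
  have keysum : ∀ (f : Fin d → ℝ), ∑ i, f i = f p + (f q + ∑ i ∈ R, f i) := by
    intro f
    rw [← Finset.add_sum_erase Finset.univ f (Finset.mem_univ p),
      ← Finset.add_sum_erase _ f hqmem]
  rw [keysum] at h1 h2
  have e1 : a1 p = c := by rw [ha1]; simp
  have e2 : a1 q = 1 := by rw [ha1]; simp [hpq.symm]
  have e3 : a2 p = -c := by rw [ha2]; simp
  have e4 : a2 q = -1 := by rw [ha2]; simp [hpq.symm]
  have eR1 : ∑ i ∈ R, a1 i * v i = ∑ i ∈ R, s i * v i := by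
    exact Finset.sum_congr rfl (fun i hi => by
      rw [ha1]; simp only [(hRs i hi).1, (hRs i hi).2, if_false])
  have eR2 : ∑ i ∈ R, a2 i * v i = ∑ i ∈ R, s i * v i := by
    exact Finset.sum_congr rfl (fun i hi => by
      rw [ha2]; simp only [(hRs i hi).1, (hRs i hi).2, if_false])
  rw [e1, e2, eR1] at h1
  rw [e3, e4, eR2] at h2
  linarith

theorem stmt17 {d : ℕ} (hd : 3 ≤ d) (k : ℕ) (hk : 2 * d ≤ k)
    (P : Set (Fin d → ℝ))
    (hP : P = {x | ∀ a ∈ Aplus d, dot a x ≤ (d : ℝ)})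
    (φ : (Fin d → ℝ) → (Fin d → ℝ))
    (hφ : φ = fun x => fun i : Fin d =>
      if (i : ℕ) < d - 1 then 2 * x i - 1 else (k : ℝ) * x i)
    (L : Set (Fin d → ℝ)) (hL : L = φ ⁻¹' P) :
    (∀ z : Fin d → ℤ,
      ((fun i => (z i : ℝ)) ∈ L ↔
        (∀ i : Fin d, (i : ℕ) < d - 1 → (z i = 0 ∨ z i = 1)) ∧
          z ⟨d - 1, by omega⟩ = 0)) ∧
      adim (convexHull ℝ (L ∩ intPoints d)) = d - 1 := by
  have hdlt : d - 1 < d := by omega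
  set last : Fin d := ⟨d - 1, hdlt⟩ with hlastdef
  have hlast_eq : (⟨d - 1, by omega⟩ : Fin d) = last := rfl
  have hlastval : ((last : Fin d) : ℕ) = d - 1 := rfl
  -- membership characterization
  have hmem : ∀ x : Fin d → ℝ, x ∈ L ↔ ∀ a ∈ Aplus d, dot a (φ x) ≤ (d : ℝ) := by
    intro x
    rw [hL, Set.mem_preimage, hP]
    exact Iff.rfl
  have hφ_apply : ∀ (x : Fin d → ℝ) (i : Fin d),
      φ x i = if (i : ℕ) < d - 1 then 2 * x i - 1 else (k : ℝ) * x i := by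
    intro x i; rw [hφ]
  -- the key integer characterization
  have part1 : ∀ z : Fin d → ℤ,
      ((fun i => (z i : ℝ)) ∈ L ↔
        (∀ i : Fin d, (i : ℕ) < d - 1 → (z i = 0 ∨ z i = 1)) ∧ z last = 0) := by
    intro z
    set v : Fin d → ℝ := φ (fun i => (z i : ℝ)) with hv
    have hvi : ∀ i : Fin d, v i =
        if (i : ℕ) < d - 1 then 2 * (z i : ℝ) - 1 else (k : ℝ) * (z i : ℝ) :=
      fun i => hφ_apply _ i
    have hv_lt : ∀ i : Fin d, (i : ℕ) < d - 1 → v i = 2 * (z i : ℝ) - 1 := by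
      intro i hi; rw [hvi i, if_pos hi]
    have hv_last : v last = (k : ℝ) * (z last : ℝ) := by
      rw [hvi last, if_neg (by rw [hlastval]; omega)]
    have hlast_of : ∀ i : Fin d, ¬ ((i : ℕ) < d - 1) → i = last := by
      intro i hi
      apply Fin.ext
      rw [hlastval]
      have := i.isLt
      omega
    rw [hmem]
    constructor
    · intro h
      -- sign vector
      set s : Fin d → ℝ := fun i =>
        if (i : ℕ) < d - 1 then (if 1 ≤ z i then 1 else -1) else (if 0 ≤ z i then 1 else -1)
        with hs_def
      have hs : ∀ i, s i = 1 ∨ s i = -1 := by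
        intro i
        simp only [hs_def]
        split <;> split <;> simp
      have hnn : ∀ i, 0 ≤ s i * v i := by
        intro i
        by_cases hi : (i : ℕ) < d - 1
        · rw [hv_lt i hi]
          simp only [hs_def, if_pos hi]
          by_cases h1 : 1 ≤ z i
          · have : (1 : ℝ) ≤ (z i : ℝ) := by exact_mod_cast h1
            rw [if_pos h1]; nlinarith
          · have : (z i : ℝ) ≤ 0 := by
              have : z i ≤ 0 := by omega
              exact_mod_cast this
            rw [if_neg h1]; nlinarith
        · have hieq := hlast_of i hi
          subst hieq
          rw [hv_last]
          simp only [hs_def, hi, if_false]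
          by_cases h1 : 0 ≤ z last
          · have : (0 : ℝ) ≤ (z last : ℝ) := by exact_mod_cast h1
            rw [if_pos h1]
            positivity
          · have : (z last : ℝ) ≤ 0 := by
              have : z last ≤ 0 := by omega
              exact_mod_cast this
            rw [if_neg h1]
            nlinarith [Nat.cast_nonneg (α := ℝ) k]
      have hs_last_abs : s last * v last = (k : ℝ) * |(z last : ℝ)| := by
        rw [hv_last]
        simp only [hs_def]
        rw [if_neg (show ¬ ((last : ℕ) < d - 1) by rw [hlastval]; omega)]
        by_cases h1 : 0 ≤ z last
        · have h1' : (0 : ℝ) ≤ (z last : ℝ) := by exact_mod_cast h1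
          rw [if_pos h1, abs_of_nonneg h1']
          ring
        · have h1' : (z last : ℝ) ≤ 0 := by
            have : z last ≤ 0 := by omega
            exact_mod_cast this
          rw [if_neg h1, abs_of_nonpos h1']
          ring
      -- Step A : z last = 0
      have hzlast : z last = 0 := by
        have hpq : (⟨0, by omega⟩ : Fin d) ≠ (⟨1, by omega⟩ : Fin d) := by
          simp [Fin.ext_iff]
        have hA := drop2 h hs hpq
        have hlast_mem : last ∈ (Finset.univ.erase (⟨0, by omega⟩ : Fin d)).erase
            (⟨1, by omega⟩ : Fin d) := by
          simp only [Finset.mem_erase, Finset.mem_univ, and_true]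
          exact ⟨Fin.ne_of_val_ne (show d - 1 ≠ 1 by omega),
            Fin.ne_of_val_ne (show d - 1 ≠ 0 by omega)⟩
        have hsingle : s last * v last ≤
            ∑ i ∈ (Finset.univ.erase (⟨0, by omega⟩ : Fin d)).erase (⟨1, by omega⟩ : Fin d),
              s i * v i :=
          Finset.single_le_sum (fun i _ => hnn i) hlast_mem
        rw [hs_last_abs] at hsingle
        have hkd : (k : ℝ) * |(z last : ℝ)| ≤ (d : ℝ) := le_trans hsingle hA
        by_contra hne
        have habs : (1 : ℝ) ≤ |(z last : ℝ)| := by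
          have : 1 ≤ |z last| := by
            rcases le_or_gt 0 (z last) with h1 | h1
            · rw [abs_of_nonneg h1]; omega
            · rw [abs_of_neg h1]; omega
          calc (1 : ℝ) = ((1 : ℤ) : ℝ) := by norm_num
          _ ≤ (|z last| : ℝ) := by exact_mod_cast this
          _ = |(z last : ℝ)| := by push_cast; ring
        have hkR : (2 * d : ℝ) ≤ (k : ℝ) := by exact_mod_cast hk
        have hdR : (3 : ℝ) ≤ (d : ℝ) := by exact_mod_cast hd
        nlinarith
      -- Step B : coordinates in {0,1}
      refine ⟨?_, hzlast⟩
      intro j hj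
      have hvlast0 : v last = 0 := by rw [hv_last, hzlast]; norm_num
      have hB := fix1 h hs last hvlast0
      -- convert to integer sum
      set W : Fin d → ℤ := fun i => if (i : ℕ) < d - 1 then |2 * z i - 1| else 0 with hW
      have hterm : ∀ i, s i * v i = (W i : ℝ) := by
        intro i
        by_cases hi : (i : ℕ) < d - 1
        · rw [hv_lt i hi]
          simp only [hs_def, hW, if_pos hi]
          by_cases h1 : 1 ≤ z i
          · rw [if_pos h1, abs_of_nonneg (by omega : (0:ℤ) ≤ 2 * z i - 1)]
            push_cast; ring
          · rw [if_neg h1, abs_of_nonpos (by omega : 2 * z i - 1 ≤ (0:ℤ))]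
            push_cast; ring
        · have hieq := hlast_of i hi
          subst hieq
          rw [hvlast0, hW]
          simp [hi]
      rw [Finset.sum_congr rfl (fun i _ => hterm i)] at hB
      have hBint : ∑ i, W i ≤ (d : ℤ) := by exact_mod_cast hB
      by_contra hcon
      push_neg at hcon
      obtain ⟨hc0, hc1⟩ := hcon
      have hWj : 3 ≤ W j := by
        simp only [hW, if_pos hj]
        rcases lt_or_ge (z j) 0 with h1 | h1
        · rw [abs_of_nonpos (by omega)]; omega
        · rw [abs_of_nonneg (by omega)]; omega
      have hsplit : ∑ i, W i = W j + ∑ i ∈ Finset.univ.erase j, W i :=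
        (Finset.add_sum_erase _ W (Finset.mem_univ j)).symm
      have hWge : ∀ i : Fin d, (if (i : ℕ) < d - 1 then (1:ℤ) else 0) ≤ W i := by
        intro i
        simp only [hW]
        by_cases hi : (i : ℕ) < d - 1
        · rw [if_pos hi, if_pos hi]
          rcases le_or_gt 1 (z i) with h2 | h2
          · rw [abs_of_nonneg (by omega)]; omega
          · rw [abs_of_nonpos (by omega)]; omega
        · rw [if_neg hi, if_neg hi]
      have hrest : ∑ i ∈ Finset.univ.erase j, (if (i : ℕ) < d - 1 then (1:ℤ) else 0)
          ≤ ∑ i ∈ Finset.univ.erase j, W i :=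
        Finset.sum_le_sum (fun i _ => hWge i)
      have hcount : ∑ i ∈ Finset.univ.erase j, (if (i : ℕ) < d - 1 then (1:ℤ) else 0)
          = (((Finset.univ.erase j).filter (fun i : Fin d => (i : ℕ) < d - 1)).card : ℤ) := by
        rw [Finset.sum_ite, Finset.sum_const, Finset.sum_const]
        simp
      have hfiltercard :
          ((Finset.univ.erase j).filter (fun i : Fin d => (i : ℕ) < d - 1)).card = d - 2 := by
        have h1 : (Finset.univ.erase j).filter (fun i : Fin d => (i : ℕ) < d - 1)
            = (Finset.univ.filter (fun i : Fin d => (i : ℕ) < d - 1)).erase j := by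
          ext i
          simp only [Finset.mem_filter, Finset.mem_erase, Finset.mem_univ, true_and, and_true]
          all_goals tauto
        have h2 : Finset.univ.filter (fun i : Fin d => (i : ℕ) < d - 1)
            = Finset.univ.erase last := by
          ext i
          simp only [Finset.mem_filter, Finset.mem_erase, Finset.mem_univ, true_and, and_true]
          constructor
          · intro hi hieq
            rw [hieq, hlastval] at hi
            omega
          · intro hne
            have h3 := i.isLt
            rcases lt_or_ge (i : ℕ) (d - 1) with h4 | h4
            · exact h4
            · exact absurd (Fin.ext (show (i : ℕ) = (last : ℕ) by rw [hlastval]; omega)) hne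
        rw [h1, h2, Finset.card_erase_of_mem, Finset.card_erase_of_mem]
        · simp only [Finset.card_univ, Fintype.card_fin]
          omega
        · exact Finset.mem_univ last
        · rw [h2] at *
          exact Finset.mem_erase.mpr ⟨Fin.ne_of_val_ne (by rw [hlastval]; omega),
            Finset.mem_univ j⟩
      rw [hcount, hfiltercard] at hrest
      have hd2 : ((d - 2 : ℕ) : ℤ) = (d : ℤ) - 2 := by
        have : 2 ≤ d := by omega
        omega
      omega
    · -- converse
      rintro ⟨h01, h0⟩ a ha
      obtain ⟨has, _⟩ := ha
      rw [dot]
      have hbound : ∀ i : Fin d, a i * v i ≤ 1 := by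
        intro i
        by_cases hi : (i : ℕ) < d - 1
        · rw [hv_lt i hi]
          rcases h01 i hi with h1 | h1 <;> rcases has i with h2 | h2 <;>
            rw [h1, h2] <;> norm_num
        · have hieq := hlast_of i hi
          subst hieq
          rw [hv_last, h0]
          norm_num
      calc ∑ i, a i * v i ≤ ∑ _i : Fin d, (1 : ℝ) := Finset.sum_le_sum (fun i _ => hbound i)
        _ = d := by simp
  refine ⟨fun z => part1 z, ?_⟩
  -- Part 2 : dimension
  set E : Set (Fin d → ℝ) :=
    {x | (∀ i : Fin d, (i : ℕ) < d - 1 → (x i = 0 ∨ x i = 1)) ∧ x last = 0} with hEdef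
  have hlast_of : ∀ i : Fin d, ¬ ((i : ℕ) < d - 1) → i = last := by
    intro i hi
    apply Fin.ext
    rw [hlastval]
    have := i.isLt
    omega
  have hE : L ∩ intPoints d = E := by
    ext x
    constructor
    · rintro ⟨hxL, z, rfl⟩
      obtain ⟨h01, h0⟩ := (part1 z).mp hxL
      constructor
      · intro i hi
        rcases h01 i hi with h | h <;> simp [h]
      · simp [h0]
    · rintro ⟨h01, h0⟩
      set z : Fin d → ℤ := fun i => if x i = 1 then 1 else 0 with hz
      have hxz : x = fun i => (z i : ℝ) := by
        funext i
        by_cases hi : (i : ℕ) < d - 1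
        · rcases h01 i hi with h | h <;> simp [hz, h]
        · have hieq := hlast_of i hi
          subst hieq
          simp [hz, h0]
      refine ⟨?_, z, hxz⟩
      rw [hxz]
      apply (part1 z).mpr
      constructor
      · intro i _
        simp only [hz]
        split <;> simp
      · simp only [hz, h0]
        norm_num
  rw [hE, adim, affineSpan_convexHull, direction_affineSpan]
  -- vectorSpan = hyperplane
  set W : Submodule ℝ (Fin d → ℝ) := LinearMap.ker (LinearMap.proj (R := ℝ) last) with hWdef
  have hzeroE : (0 : Fin d → ℝ) ∈ E := by
    constructor
    · intro i _; left; rfl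
    · rfl
  have hspan : vectorSpan ℝ E = W := by
    apply le_antisymm
    · rw [vectorSpan_def, Submodule.span_le]
      rintro u hu
      rw [Set.mem_vsub] at hu
      obtain ⟨x, hx, y, hy, rfl⟩ := hu
      simp only [hWdef, SetLike.mem_coe, LinearMap.mem_ker, LinearMap.proj_apply]
      show (x - y) last = 0
      have hx2 := hx.2
      have hy2 := hy.2
      simp only [Pi.sub_apply, hx2, hy2, sub_zero]
    · intro x hx
      have hxlast : x last = 0 := by
        simpa only [hWdef, LinearMap.mem_ker, LinearMap.proj_apply] using hx
      have hxsum : x = ∑ i, Pi.single i (x i) := (Finset.univ_sum_single x).symm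
      rw [hxsum]
      apply Submodule.sum_mem
      intro i _
      by_cases hi : (i : ℕ) < d - 1
      · have hsingleE : (Pi.single i (1:ℝ) : Fin d → ℝ) ∈ E := by
          constructor
          · intro j _
            by_cases hji : j = i
            · subst hji; right; simp
            · left; simp [Pi.single_apply, hji]
          · have hne : last ≠ i := by
              simp only [hlastdef, Fin.ext_iff]
              omega
            simp [Pi.single_apply, hne]
        have hmemv : (Pi.single i (1:ℝ) : Fin d → ℝ) ∈ vectorSpan ℝ E := by
          have := vsub_mem_vectorSpan ℝ hsingleE hzeroE
          simpa using this
        have : Pi.single i (x i) = x i • (Pi.single i (1:ℝ) : Fin d → ℝ) := by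
          rw [← Pi.single_smul]
          simp
        rw [this]
        exact Submodule.smul_mem _ _ hmemv
      · have hieq := hlast_of i hi
        subst hieq
        rw [hxlast]
        simp only [Pi.single_zero]
        exact Submodule.zero_mem _
  rw [hspan]
  -- finrank of the hyperplane
  have hsurj : Function.Surjective (LinearMap.proj (R := ℝ) (φ := fun _ : Fin d => ℝ) last) :=
    fun y => ⟨fun _ => y, rfl⟩
  have hrange : LinearMap.range (LinearMap.proj (R := ℝ) (φ := fun _ : Fin d => ℝ) last) = ⊤ :=
    LinearMap.range_eq_top.mpr hsurj
  have hrn := LinearMap.finrank_range_add_finrank_ker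
    (LinearMap.proj (R := ℝ) (φ := fun _ : Fin d => ℝ) last)
  rw [hrange, ← hWdef] at hrn
  have htop : Module.finrank ℝ (⊤ : Submodule ℝ ℝ) = 1 := by
    simp
  rw [htop, Module.finrank_fin_fun] at hrn
  omega
end
end

section
/- Let P be a d-dimensional integral polytope in R^d and m ∈ N. Then the family of all d-dimensional rational polytopes L in R^d such that L is maximal lattice-free, conv(L ∩ Z^d) = P, and m(L) = m, is finite. -/
open Pointwise

noncomputable section

lemma dot_add_single {d : ℕ} (a x : Fin d → ℝ) (c : ℝ) (j : Fin d) :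
    dot a (x + c • (Pi.single j 1 : Fin d → ℝ)) = dot a x + c * a j := by
  simp only [dot, Pi.add_apply, Pi.smul_apply, Pi.single_apply, smul_eq_mul, mul_add,
    Finset.sum_add_distrib, mul_ite, mul_one, mul_zero]
  congr 1
  rw [Finset.sum_ite_eq' Finset.univ j (fun k => a k * c)]
  simp [mul_comm]

theorem stmt18 {d : ℕ} (P : Set (Fin d → ℝ))
    (hP : ∃ V : Finset (Fin d → ℤ),
      P = convexHull ℝ ((fun z : Fin d → ℤ => fun i => ((z i : ℝ))) '' (V : Set (Fin d → ℤ))))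
    (hPdim : adim P = d) (m : ℕ) :
    {L : Set (Fin d → ℝ) | IsRationalPolyhedron L ∧ Bornology.IsBounded L ∧
      adim L = d ∧ MaxLatticeFree L ∧
      convexHull ℝ (L ∩ intPoints d) = P ∧ mfw L = (m : ℕ∞)}.Finite := by
  classical
  rcases Nat.eq_zero_or_pos d with hd0 | hd0
  · subst hd0; exact Set.toFinite _
  obtain ⟨V, hV⟩ := hP
  have hPconv : Convex ℝ P := hV ▸ convex_convexHull ℝ _
  have hPne : P.Nonempty := by
    rcases Set.eq_empty_or_nonempty P with h | h
    · exfalso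
      rw [h] at hPdim
      unfold adim at hPdim
      rw [AffineSubspace.span_empty, AffineSubspace.direction_bot] at hPdim
      simp at hPdim
      omega
    · exact h
  have htop : affineSpan ℝ P = ⊤ := by
    have h1 : (affineSpan ℝ P).direction = ⊤ :=
      Submodule.eq_top_of_finrank_eq (hPdim.trans (Module.finrank_fin_fun ℝ).symm)
    exact (AffineSubspace.direction_eq_top_iff_of_nonempty
      ((affineSpan_nonempty ℝ).mpr hPne)).mp h1
  obtain ⟨x0, hx0⟩ : (interior P).Nonempty :=
    hPconv.interior_nonempty_iff_affineSpan_eq_top.mpr htop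
  obtain ⟨ε, hε, hball⟩ := Metric.isOpen_iff.mp isOpen_interior x0 hx0
  set N : ℤ := ⌈(m : ℝ) / ε⌉ with hNdef
  have hN0 : (0:ℝ) ≤ (N:ℝ) := by
    have : (0:ℝ) ≤ (m:ℝ)/ε := by positivity
    exact this.trans (Int.le_ceil _)
  set K : ℤ := ⌈(N:ℝ) * ∑ j, |x0 j| + m⌉ with hKdef
  set A : Set ((Fin d → ℤ) × ℤ) := {p | (∀ j, |p.1 j| ≤ N) ∧ |p.2| ≤ K} with hAdef
  have hAfin : A.Finite := by
    apply Set.Finite.subset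
      (Set.Finite.prod (Set.Finite.pi fun _ : Fin d => Set.finite_Icc (-N) N)
        (Set.finite_Icc (-K) K))
    rintro ⟨a, b⟩ ⟨h1, h2⟩
    refine ⟨fun j _ => ?_, ?_⟩
    · exact Set.mem_Icc.mpr (abs_le.mp (h1 j))
    · exact Set.mem_Icc.mpr (abs_le.mp h2)
  set slab : (Fin d → ℤ) × ℤ → Set (Fin d → ℝ) := fun p =>
    {x | (p.2:ℝ) - (m:ℝ) ≤ dot (fun j => ((p.1 j : ℝ))) x ∧
      dot (fun j => ((p.1 j : ℝ))) x ≤ (p.2:ℝ)} with hslabdef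
  set F : Set (Fin d → ℝ) → Set ((Fin d → ℤ) × ℤ) :=
    fun L => {p | p ∈ A ∧ L ⊆ slab p} with hFdef
  have key : ∀ L : Set (Fin d → ℝ), MaxLatticeFree L →
      convexHull ℝ (L ∩ intPoints d) = P → mfw L = (m : ℕ∞) →
      L = ⋂ p ∈ F L, slab p := by
    intro L hmax hconv hm
    have hLconv : Convex ℝ L := hmax.1.2.1
    have hPL : P ⊆ L := by
      rw [← hconv]; exact convexHull_min Set.inter_subset_left hLconv
    have hrep : HasWidthRep L m := by
      have hne : {m' : ℕ∞ | ∃ k : ℕ, m' = (k:ℕ∞) ∧ HasWidthRep L k}.Nonempty := by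
        rcases Set.eq_empty_or_nonempty
          {m' : ℕ∞ | ∃ k : ℕ, m' = (k:ℕ∞) ∧ HasWidthRep L k} with h | h
        · exfalso
          unfold mfw at hm
          rw [h, sInf_empty] at hm
          exact (ENat.coe_ne_top m) hm.symm
        · exact h
      have hmem := csInf_mem hne
      unfold mfw at hm
      rw [hm] at hmem
      obtain ⟨k, hk, hrepk⟩ := hmem
      have : m = k := by exact_mod_cast hk
      rwa [this]
    obtain ⟨n, a, b, hane, hLeq⟩ := hrep
    have hmemL : ∀ x ∈ L, ∀ i, (b i : ℝ) - (m:ℝ) ≤ dot (fun j => ((a i j : ℝ))) x ∧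
        dot (fun j => ((a i j : ℝ))) x ≤ (b i : ℝ) := by
      intro x hx
      rw [hLeq] at hx
      exact hx
    have hpair : ∀ i, (a i, b i) ∈ F L := by
      intro i
      have hsub : L ⊆ slab (a i, b i) := fun x hx => hmemL x hx i
      have haN : ∀ j, |((a i j : ℝ))| ≤ (N:ℝ) := by
        intro j
        have hmemc : ∀ c : ℝ, |c| < ε →
            (b i : ℝ) - (m:ℝ) ≤ dot (fun j' => ((a i j' : ℝ))) x0 + c * (a i j : ℝ) ∧
            dot (fun j' => ((a i j' : ℝ))) x0 + c * (a i j : ℝ) ≤ (b i : ℝ) := by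
          intro c hc
          have hx : x0 + c • (Pi.single j 1 : Fin d → ℝ) ∈ L := by
            apply hPL
            apply interior_subset
            apply hball
            rw [Metric.mem_ball, dist_pi_lt_iff hε]
            intro k
            rcases eq_or_ne k j with rfl | hkj
            · simp [Real.dist_eq, hc]
            · simp [Real.dist_eq, Pi.single_apply, hkj, hε]
          have := hmemL _ hx i
          rwa [dot_add_single] at this
        have hp := hmemc (ε/2) (by rw [abs_of_pos (by linarith)]; linarith)
        have hq := hmemc (-(ε/2)) (by rw [abs_neg, abs_of_pos (by linarith)]; linarith)
        have h1 : (a i j : ℝ) * ε ≤ m := by nlinarith [hp.2, hq.1]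
        have h2 : -((a i j : ℝ)) * ε ≤ m := by nlinarith [hq.2, hp.1]
        have habs : |((a i j : ℝ))| ≤ (m:ℝ)/ε := by
          rw [abs_le]
          constructor
          · have h3 := (le_div_iff₀ hε).mpr h2
            linarith
          · exact (le_div_iff₀ hε).mpr h1
        exact habs.trans (Int.le_ceil _)
      refine ⟨⟨?_, ?_⟩, hsub⟩
      · intro j
        have := haN j
        rw [← Int.cast_abs] at this
        exact_mod_cast this
      · have hx0L := hmemL x0 (hPL (interior_subset hx0)) i
        have hdot : |dot (fun j => ((a i j:ℝ))) x0| ≤ (N:ℝ) * ∑ j, |x0 j| := by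
          unfold dot
          calc |∑ j, (a i j:ℝ) * x0 j| ≤ ∑ j, |(a i j:ℝ) * x0 j| :=
                Finset.abs_sum_le_sum_abs _ _
            _ ≤ ∑ j, (N:ℝ) * |x0 j| := by
                apply Finset.sum_le_sum
                intro j _
                rw [abs_mul]
                exact mul_le_mul_of_nonneg_right (haN j) (abs_nonneg _)
            _ = (N:ℝ) * ∑ j, |x0 j| := by rw [Finset.mul_sum]
        have hb : |((b i : ℝ))| ≤ (N:ℝ) * ∑ j, |x0 j| + m := by
          rw [abs_le] at hdot ⊢
          constructor
          · linarith [hx0L.2]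
          · linarith [hx0L.1]
        have : ((|b i| : ℤ) : ℝ) ≤ (K:ℝ) := by
          rw [Int.cast_abs]
          exact hb.trans (Int.le_ceil _)
        exact_mod_cast this
    apply Set.Subset.antisymm
    · intro x hx
      exact Set.mem_iInter₂.mpr fun p hp => hp.2 hx
    · intro x hx
      rw [hLeq]
      intro i
      exact Set.mem_iInter₂.mp hx _ (hpair i)
  have himg : (F '' {L : Set (Fin d → ℝ) | IsRationalPolyhedron L ∧ Bornology.IsBounded L ∧
      adim L = d ∧ MaxLatticeFree L ∧
      convexHull ℝ (L ∩ intPoints d) = P ∧ mfw L = (m : ℕ∞)}).Finite := by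
    apply hAfin.finite_subsets.subset
    rintro _ ⟨L, hL, rfl⟩ p hp
    exact hp.1
  apply Set.Finite.of_finite_image himg
  intro L1 h1 L2 h2 hF
  rw [key L1 h1.2.2.2.1 h1.2.2.2.2.1 h1.2.2.2.2.2, key L2 h2.2.2.2.1 h2.2.2.2.2.1 h2.2.2.2.2.2, hF]
end
end
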